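/- arXiv:2301.02936 — 9 statements merged into one kernel-verified Lean document; each statement's English description precedes it below -/
import Mathlib

section
/- Every splittable pattern is collectable: if a pattern P of uniformity r can be split into consecutive blocks each of the form A^t B^t or B^t A^t, then for every k ≥ 2 there exists an ordered r-uniform matching of size k in which every pair of edges forms a copy of P. -/
/-!
Cut the word into its blocks `AᵗBᵗ` or `BᵗAᵗ`. For `k` edges, block `i` of the word (half-length
`t`) becomes `k` consecutive intervals of length `t`, one per edge, listed in increasing order of
the edges when the block starts with `A` and in decreasing order when it starts with `B`. Two
edges `m < m'` then meet in each block exactly as the word prescribes (`m` plays `A`), so they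
form the pattern; all the work is in checking that the resulting enumeration of their union is
increasing.
-/

/-- The word `w` can be partitioned into consecutive blocks, each being a run of one
letter followed by an equal-length run of the other letter. -/
def Splittable (r : ℕ) (w : ℕ → Bool) : Prop :=
  ∃ (k : ℕ) (c : ℕ → ℕ), c 0 = 0 ∧ c k = 2 * r ∧
    ∀ i < k, ∃ t, 1 ≤ t ∧ c (i + 1) = c i + 2 * t ∧
      (∀ j, c i ≤ j → j < c i + t → w j = w (c i)) ∧
      (∀ j, c i + t ≤ j → j < c i + 2 * t → w j = !(w (c i)))

/-- Two disjoint `r`-sets `e`, `f` of naturals form the pattern given by word `p`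
(`true` = letter of `e`): the increasing enumeration of `e ∪ f` hits `e` exactly at
the positions where `p` is `true`. -/
def FormsPattern (r : ℕ) (p : ℕ → Bool) (e f : Finset ℕ) : Prop :=
  Disjoint e f ∧ e.card = r ∧ f.card = r ∧
  ∃ h : (e ∪ f).card = 2 * r,
    ∀ i : Fin (2 * r), (((e ∪ f).orderIsoOfFin h i : ℕ) ∈ e) ↔ p i = true

open Finset

theorem formsPattern_of_strictMonoOn {r : ℕ} {p : ℕ → Bool} {e f : Finset ℕ}
    (hef : Disjoint e f) (he : e.card = r) (hf : f.card = r) {g : ℕ → ℕ}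
    (hg : StrictMonoOn g (Set.Iio (2 * r)))
    (hge : ∀ j < 2 * r, p j = true → g j ∈ e) (hgf : ∀ j < 2 * r, p j = false → g j ∈ f) :
    FormsPattern r p e f := by
  have hcard : (e ∪ f).card = 2 * r := by rw [card_union_of_disjoint hef, he, hf, two_mul]
  have hmem : ∀ j < 2 * r, g j ∈ e ∪ f := fun j hj => by
    cases hpj : p j
    · exact mem_union_right _ (hgf j hj hpj)
    · exact mem_union_left _ (hge j hj hpj)
  have henum : (fun i : Fin (2 * r) => g i) = (e ∪ f).orderEmbOfFin hcard :=
    orderEmbOfFin_unique hcard (fun i => hmem i i.isLt) fun i i' h => hg i.isLt i'.isLt h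
  refine ⟨hef, he, hf, hcard, fun i => ?_⟩
  rw [coe_orderIsoOfFin_apply, ← henum]
  cases hpi : p i
  · simpa using disjoint_right.1 hef (hgf i i.isLt hpi)
  · simpa using hge i i.isLt hpi

structure Splitting (r : ℕ) (p : ℕ → Bool) where
  K : ℕ
  c : ℕ → ℕ
  t : ℕ → ℕ
  c_zero : c 0 = 0
  c_K : c K = 2 * r
  c_succ : ∀ i < K, c (i + 1) = c i + 2 * t i
  first_run : ∀ i < K, ∀ j, c i ≤ j → j < c i + t i → p j = p (c i)
  second_run : ∀ i < K, ∀ j, c i + t i ≤ j → j < c i + 2 * t i → p j = !p (c i)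

theorem Splittable.nonempty_splitting {r : ℕ} {p : ℕ → Bool} (h : Splittable r p) :
    Nonempty (Splitting r p) := by
  obtain ⟨K, c, hc0, hcK, hblock⟩ := h
  choose! t ht using hblock
  exact ⟨⟨K, c, t, hc0, hcK, fun i hi => (ht i hi).2.1, fun i hi => (ht i hi).2.2.1,
    fun i hi => (ht i hi).2.2.2⟩⟩

namespace Splitting

variable {r : ℕ} {p : ℕ → Bool} (S : Splitting r p)

theorem c_eq_two_mul_sum {n : ℕ} (hn : n ≤ S.K) : S.c n = 2 * ∑ i ∈ range n, S.t i := by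
  induction n with
  | zero => simp [S.c_zero]
  | succ n ih => rw [S.c_succ n hn, ih (by omega), sum_range_succ, mul_add]

theorem sum_t : ∑ i ∈ range S.K, S.t i = r := by
  have := S.c_eq_two_mul_sum le_rfl
  rw [S.c_K] at this
  omega

theorem c_mono {i j : ℕ} (hij : i ≤ j) (hj : j ≤ S.K) : S.c i ≤ S.c j := by
  rw [S.c_eq_two_mul_sum (hij.trans hj), S.c_eq_two_mul_sum hj]
  exact Nat.mul_le_mul_left 2 (sum_le_sum_of_subset (range_subset_range.2 hij))

def block (j : ℕ) : ℕ := Nat.findGreatest (fun i => S.c i ≤ j) S.K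

theorem c_block_le (j : ℕ) : S.c (S.block j) ≤ j :=
  Nat.findGreatest_spec (P := fun i => S.c i ≤ j) (Nat.zero_le _) (by simp [S.c_zero])

theorem block_lt {j : ℕ} (hj : j < 2 * r) : S.block j < S.K := by
  refine lt_of_le_of_ne (Nat.findGreatest_le _) fun h => ?_
  have := S.c_block_le j
  rw [h, S.c_K] at this
  omega

theorem lt_c_block_succ {j : ℕ} (hj : j < 2 * r) : j < S.c (S.block j + 1) := by
  by_contra! h
  have := Nat.le_findGreatest (P := fun i => S.c i ≤ j) (S.block_lt hj) h
  exact Nat.lt_irrefl _ (Nat.lt_of_succ_le this)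

theorem block_mono : Monotone S.block := fun _ _ hjj =>
  Nat.le_findGreatest (Nat.findGreatest_le _) ((S.c_block_le _).trans hjj)

theorem lt_block_end {j : ℕ} (hj : j < 2 * r) :
    j < S.c (S.block j) + 2 * S.t (S.block j) :=
  S.c_succ _ (S.block_lt hj) ▸ S.lt_c_block_succ hj

variable (k : ℕ)

/-- Within block `i` of the matching the `k` edges occupy consecutive slots of length `t i`, in
increasing order if block `i` of the word starts with `true` and in decreasing order otherwise;
either way an earlier and a later edge meet there as the block of the word prescribes. -/
def slot (i m : ℕ) : ℕ := if p (S.c i) then m else k - 1 - m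

theorem slot_lt {i m : ℕ} (hm : m < k) : S.slot k i m < k := by
  unfold slot; split <;> omega

theorem slot_inj {i m m' : ℕ} (hm : m < k) (hm' : m' < k) (h : S.slot k i m = S.slot k i m') :
    m = m' := by
  unfold slot at h; split at h <;> omega

theorem slot_firstRun_lt_slot_secondRun {i m m' : ℕ} (hmm' : m < m') (hm' : m' < k) :
    S.slot k i (if p (S.c i) then m else m') < S.slot k i (if !p (S.c i) then m else m') := by
  unfold slot; cases p (S.c i) <;> simp <;> omega

/-- Block `i` of the matching is `[k * c i, k * c (i + 1))`, of which only the first half is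
used. -/
def chunk (i m : ℕ) : Finset ℕ :=
  Ico (k * S.c i + S.slot k i m * S.t i) (k * S.c i + S.slot k i m * S.t i + S.t i)

def edge (m : ℕ) : Finset ℕ := (range S.K).biUnion fun i => S.chunk k i m

theorem card_chunk (i m : ℕ) : (S.chunk k i m).card = S.t i := by simp [chunk]

theorem le_of_mem_chunk {i m x : ℕ} (hx : x ∈ S.chunk k i m) : k * S.c i ≤ x := by
  simp only [chunk, mem_Ico] at hx; omega

theorem lt_of_mem_chunk {i i' m x : ℕ} (hii' : i < i') (hi' : i' ≤ S.K) (hm : m < k)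
    (hx : x ∈ S.chunk k i m) : x < k * S.c i' := by
  simp only [chunk, mem_Ico] at hx
  have hslot : S.slot k i m * S.t i + S.t i ≤ k * (2 * S.t i) := by
    nlinarith [S.slot_lt k (i := i) hm]
  have hc : k * S.c (i + 1) ≤ k * S.c i' := Nat.mul_le_mul_left k (S.c_mono hii' hi')
  rw [S.c_succ i (by omega), mul_add] at hc
  omega

theorem disjoint_chunk_of_ne_block {i i' m m' : ℕ} (hi : i < S.K) (hi' : i' < S.K)
    (hm : m < k) (hm' : m' < k) (hii' : i ≠ i') : Disjoint (S.chunk k i m) (S.chunk k i' m') := by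
  rw [disjoint_left]
  intro x hx hx'
  rcases Nat.lt_or_gt_of_ne hii' with h | h
  · exact absurd (S.le_of_mem_chunk k hx') (not_le.2 (S.lt_of_mem_chunk k h hi'.le hm hx))
  · exact absurd (S.le_of_mem_chunk k hx) (not_le.2 (S.lt_of_mem_chunk k h hi.le hm' hx'))

theorem disjoint_chunk_of_ne_edge {i m m' : ℕ} (hm : m < k) (hm' : m' < k) (hmm' : m ≠ m') :
    Disjoint (S.chunk k i m) (S.chunk k i m') := by
  have hslot : S.slot k i m ≠ S.slot k i m' := fun h => hmm' (S.slot_inj k hm hm' h)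
  rw [disjoint_left]
  intro x hx hx'
  simp only [chunk, mem_Ico] at hx hx'
  rcases Nat.lt_or_gt_of_ne hslot with h | h
  · nlinarith
  · nlinarith

theorem card_edge {m : ℕ} (hm : m < k) : (S.edge k m).card = r := by
  rw [edge, card_biUnion fun _ hi _ hi' hii' =>
    S.disjoint_chunk_of_ne_block k (mem_range.1 hi) (mem_range.1 hi') hm hm hii']
  simp only [card_chunk, S.sum_t]

theorem disjoint_edge {m m' : ℕ} (hm : m < k) (hm' : m' < k) (hmm' : m ≠ m') :
    Disjoint (S.edge k m) (S.edge k m') := by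
  refine (disjoint_biUnion_left _ _ _).2 fun i hi =>
    (disjoint_biUnion_right _ _ _).2 fun i' hi' => ?_
  rw [mem_range] at hi hi'
  rcases eq_or_ne i i' with rfl | hii'
  · exact S.disjoint_chunk_of_ne_edge k hm hm' hmm'
  · exact S.disjoint_chunk_of_ne_block k hi hi' hm hm' hii'

/-- The `j`-th vertex of `edge m ∪ edge m'`: it lies on the edge named by the letter `p j`, at the
offset of `j` within its run. -/
def pairVertex (m m' j : ℕ) : ℕ :=
  k * S.c (S.block j) + S.slot k (S.block j) (if p j then m else m') * S.t (S.block j) +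
    if j < S.c (S.block j) + S.t (S.block j) then j - S.c (S.block j)
    else j - S.c (S.block j) - S.t (S.block j)

theorem pairVertex_mem_chunk (m m' : ℕ) {j : ℕ} (hj : j < 2 * r) :
    S.pairVertex k m m' j ∈ S.chunk k (S.block j) (if p j then m else m') := by
  have h1 := S.c_block_le j
  have h2 := S.lt_block_end hj
  simp only [pairVertex, chunk, mem_Ico]
  split_ifs <;> omega

theorem mem_edge_of_mem_chunk {i m x : ℕ} (hi : i < S.K) (hx : x ∈ S.chunk k i m) :
    x ∈ S.edge k m :=
  mem_biUnion.2 ⟨i, mem_range.2 hi, hx⟩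

theorem pairVertex_strictMonoOn {m m' : ℕ} (hmm' : m < m') (hm' : m' < k) :
    StrictMonoOn (S.pairVertex k m m') (Set.Iio (2 * r)) := by
  intro j hj j' hj' hjj'
  rcases (S.block_mono hjj'.le).lt_or_eq with hb | hb
  · have hedge : (if p j then m else m') < k := by split <;> omega
    calc S.pairVertex k m m' j < k * S.c (S.block j') :=
          S.lt_of_mem_chunk k hb (S.block_lt hj').le hedge (S.pairVertex_mem_chunk k m m' hj)
      _ ≤ S.pairVertex k m m' j' := S.le_of_mem_chunk k (S.pairVertex_mem_chunk k m m' hj')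
  have hstart := S.c_block_le j
  have hend := S.lt_block_end hj'
  have hi := S.block_lt hj
  simp only [pairVertex, ← hb] at hend ⊢
  set i := S.block j
  by_cases hj'_first : j' < S.c i + S.t i
  · rw [S.first_run i hi j hstart (by omega), S.first_run i hi j' (by omega) hj'_first,
      if_pos hj'_first, if_pos (show j < S.c i + S.t i by omega)]
    omega
  by_cases hj_first : j < S.c i + S.t i
  · rw [S.first_run i hi j hstart hj_first, S.second_run i hi j' (by omega) hend,
      if_pos hj_first, if_neg hj'_first]
    have hslot :=
      Nat.mul_le_mul_right (S.t i) (S.slot_firstRun_lt_slot_secondRun k (i := i) hmm' hm')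
    rw [Nat.succ_mul] at hslot
    omega
  · rw [S.second_run i hi j (by omega) (by omega), S.second_run i hi j' (by omega) hend,
      if_neg hj_first, if_neg hj'_first]
    omega

theorem formsPattern_edge {m m' : ℕ} (hmm' : m < m') (hm' : m' < k) :
    FormsPattern r p (S.edge k m) (S.edge k m') := by
  refine formsPattern_of_strictMonoOn (S.disjoint_edge k (by omega) hm' hmm'.ne)
    (S.card_edge k (by omega)) (S.card_edge k hm') (S.pairVertex_strictMonoOn k hmm' hm')
    (fun j hj hpj => ?_) (fun j hj hpj => ?_)
  · simpa [hpj] using S.mem_edge_of_mem_chunk k (S.block_lt hj) (S.pairVertex_mem_chunk k m m' hj)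
  · simpa [hpj] using S.mem_edge_of_mem_chunk k (S.block_lt hj) (S.pairVertex_mem_chunk k m m' hj)

end Splitting

theorem exists_clique_of_formsPattern {r k : ℕ} {p : ℕ → Bool} (hr : 0 < r) {E : ℕ → Finset ℕ}
    (hcard : ∀ m < k, (E m).card = r)
    (hE : ∀ m m', m < m' → m' < k → FormsPattern r p (E m) (E m')) :
    ∃ M : Finset (Finset ℕ),
      M.card = k ∧ (∀ e ∈ M, e.card = r) ∧
      (∀ e ∈ M, ∀ f ∈ M, e ≠ f → Disjoint e f) ∧
      (∀ e ∈ M, ∀ f ∈ M, e ≠ f → FormsPattern r p e f ∨ FormsPattern r p f e) := by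
  have hpair : ∀ m < k, ∀ m' < k, m ≠ m' →
      FormsPattern r p (E m) (E m') ∨ FormsPattern r p (E m') (E m) := by
    intro m hm m' hm' hmm'
    rcases Nat.lt_or_gt_of_ne hmm' with h | h
    · exact Or.inl (hE m m' h hm')
    · exact Or.inr (hE m' m h hm)
  have hdisj : ∀ m < k, ∀ m' < k, m ≠ m' → Disjoint (E m) (E m') := fun m hm m' hm' hmm' =>
    (hpair m hm m' hm' hmm').elim (·.1) (·.1.symm)
  have hinj : Set.InjOn E (range k) := by
    intro m hm m' hm' hEq
    by_contra hmm'
    have hne : (E m).Nonempty := card_pos.1 (hcard m (mem_range.1 hm) ▸ hr)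
    have hdisj' := hdisj m (mem_range.1 hm) m' (mem_range.1 hm') hmm'
    exact hne.ne_empty (disjoint_self.1 (hEq ▸ hdisj'))
  refine ⟨(range k).image E, by rw [card_image_of_injOn hinj, card_range], ?_, ?_, ?_⟩
  · simpa only [forall_mem_image, mem_range] using hcard
  all_goals
    simp only [forall_mem_image, mem_range]
    intro m hm m' hm' hne
    have hmm' : m ≠ m' := fun h => hne (h ▸ rfl)
  · exact hdisj m hm m' hm' hmm'
  · exact hpair m hm m' hm' hmm'

theorem stmt_3_general (r : ℕ) (hr : 2 ≤ r) (p : ℕ → Bool)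
    (hsp : Splittable r p) :
    ∀ k, 2 ≤ k → ∃ M : Finset (Finset ℕ),
      M.card = k ∧ (∀ e ∈ M, e.card = r) ∧
      (∀ e ∈ M, ∀ f ∈ M, e ≠ f → Disjoint e f) ∧
      (∀ e ∈ M, ∀ f ∈ M, e ≠ f → FormsPattern r p e f ∨ FormsPattern r p f e) := by
  intro k _
  obtain ⟨S⟩ := hsp.nonempty_splitting
  exact exists_clique_of_formsPattern (by omega) (fun _ hm => S.card_edge k hm)
    fun _ _ hmm' hm' => S.formsPattern_edge k hmm' hm'

/-- Every splittable pattern is collectable: for every `k ≥ 2` there is an ordered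
`r`-uniform matching of size `k` in which every pair of edges forms pattern `P`. -/
theorem stmt_3 (r : ℕ) (hr : 2 ≤ r) (p : ℕ → Bool) (hp0 : p 0 = true)
    (hsp : Splittable r p) :
    ∀ k, 2 ≤ k → ∃ M : Finset (Finset ℕ),
      M.card = k ∧ (∀ e ∈ M, e.card = r) ∧
      (∀ e ∈ M, ∀ f ∈ M, e ≠ f → Disjoint e f) ∧
      (∀ e ∈ M, ∀ f ∈ M, e ≠ f → FormsPattern r p e f ∨ FormsPattern r p f e) :=
  stmt_3_general r hr p hsp
end

section
/- If an r-pattern P is not splittable, then every P-clique has size at most 2; in particular there exists no set of three pairwise-disjoint edges on a linearly ordered vertex set such that every pair of them forms pattern P. -/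
/-!
Among three edges pairwise forming `p`, one precedes the other two: the vertex at position `0` of
a pair lies in its first edge, so the orientations cannot be cyclic. Call the edges `x, y, z` in
this order. Each comparison `x i < y j`, `y j < z k`, `x i < z k` is read off the word `p`, so the
transitivity of `<` becomes a property of `p` alone, and likewise of `!p` (reverse the edges).
This property makes the greedy decomposition of `p` succeed: after a balanced prefix, a run of
one letter is always followed by a run of the other letter that is at least as long.
-/

open Finset

section Rank

variable {α : Type*} [LinearOrder α] {s U : Finset α} {x y : α}

def rank (s : Finset α) (x : α) : ℕ := #{y ∈ s | y < x}

lemma rank_lt_rank (hx : x ∈ s) (hxy : x < y) : rank s x < rank s y :=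
  card_lt_card <| (ssubset_iff_of_subset (monotone_filter_right s fun _ _ h => h.trans hxy)).2
    ⟨x, mem_filter.2 ⟨hx, hxy⟩, fun h => lt_irrefl x (mem_filter.1 h).2⟩

lemma rank_strictMonoOn : StrictMonoOn (rank s) s := fun _ hx _ _ => rank_lt_rank hx

lemma rank_lt_rank_iff (hx : x ∈ s) (hy : y ∈ s) : rank s x < rank s y ↔ x < y :=
  rank_strictMonoOn.lt_iff_lt hx hy

lemma rank_injOn : Set.InjOn (rank s) s := rank_strictMonoOn.injOn

lemma rank_lt_card (hx : x ∈ s) : rank s x < #s :=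
  card_lt_card (filter_ssubset.2 ⟨x, hx, lt_irrefl x⟩)

lemma rank_orderEmbOfFin {k : ℕ} (h : #s = k) (i : Fin k) :
    rank s (s.orderEmbOfFin h i) = i := by
  have : {y ∈ s | y < s.orderEmbOfFin h i} = (Iio i).map (s.orderEmbOfFin h).toEmbedding := by
    ext y
    simp only [mem_filter, mem_map, mem_Iio, RelEmbedding.coe_toEmbedding]
    constructor
    · rintro ⟨hy, hlt⟩
      obtain ⟨j, rfl⟩ : y ∈ Set.range (s.orderEmbOfFin h) := by
        rwa [range_orderEmbOfFin]
      exact ⟨j, (s.orderEmbOfFin h).lt_iff_lt.1 hlt, rfl⟩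
    · rintro ⟨j, hj, rfl⟩
      exact ⟨orderEmbOfFin_mem s h j, (s.orderEmbOfFin h).lt_iff_lt.2 hj⟩
  rw [rank, this, card_map, Fin.card_Iio]

lemma exists_rank_eq {n : ℕ} (hn : n < #s) : ∃ x ∈ s, rank s x = n :=
  ⟨s.orderEmbOfFin rfl ⟨n, hn⟩, orderEmbOfFin_mem s rfl _, rank_orderEmbOfFin rfl _⟩

lemma rank_eq_count (hsU : s ⊆ U) (P : ℕ → Prop) [DecidablePred P]
    (hP : ∀ y ∈ U, y ∈ s ↔ P (rank U y)) (hx : x ∈ U) :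
    rank s x = Nat.count P (rank U x) := by
  rw [Nat.count_eq_card_filter_range]
  refine card_bij (fun y _ => rank U y) (fun y hy => ?_) (fun y hy z hz h => ?_) fun n hn => ?_
  · obtain ⟨hys, hyx⟩ := mem_filter.1 hy
    exact mem_filter.2 ⟨mem_range.2 (rank_lt_rank (hsU hys) hyx), (hP y (hsU hys)).1 hys⟩
  · exact rank_injOn (hsU (mem_filter.1 hy).1) (hsU (mem_filter.1 hz).1) h
  · obtain ⟨hn, hPn⟩ := mem_filter.1 hn
    obtain ⟨y, hyU, rfl⟩ := exists_rank_eq ((mem_range.1 hn).trans (rank_lt_card hx))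
    exact ⟨y, mem_filter.2 ⟨(hP y hyU).2 hPn, (rank_lt_rank_iff hyU hx).1 (mem_range.1 hn)⟩, rfl⟩

end Rank

namespace FormsPattern

variable {r : ℕ} {p : ℕ → Bool} {e f : Finset ℕ}

lemma mem_left_iff (h : FormsPattern r p e f) {x : ℕ} (hx : x ∈ e ∪ f) :
    x ∈ e ↔ p (rank (e ∪ f) x) = true := by
  obtain ⟨-, -, -, hU, hσ⟩ := h
  let i : Fin (2 * r) := ⟨rank (e ∪ f) x, hU ▸ rank_lt_card hx⟩
  have hxi : (e ∪ f).orderEmbOfFin hU i = x :=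
    rank_injOn (orderEmbOfFin_mem _ hU i) hx (rank_orderEmbOfFin hU i)
  simpa [hxi] using hσ i

lemma mem_right_iff (h : FormsPattern r p e f) {x : ℕ} (hx : x ∈ e ∪ f) :
    x ∈ f ↔ p (rank (e ∪ f) x) = false := by
  rw [← Bool.not_eq_true, ← h.mem_left_iff hx]
  rcases mem_union.1 hx with hxe | hxf
  · exact iff_of_false (disjoint_left.1 h.1 hxe) (not_not.2 hxe)
  · exact iff_of_true hxf (disjoint_right.1 h.1 hxf)

lemma of_mem_left_iff (hd : Disjoint e f) (he : #e = r) (hf : #f = r)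
    (hp : ∀ x ∈ e ∪ f, x ∈ e ↔ p (rank (e ∪ f) x) = true) : FormsPattern r p e f := by
  have hU : #(e ∪ f) = 2 * r := by rw [card_union_of_disjoint hd, he, hf, two_mul]
  refine ⟨hd, he, hf, hU, fun i => ?_⟩
  rw [coe_orderIsoOfFin_apply, hp _ (orderEmbOfFin_mem _ hU i), rank_orderEmbOfFin]

lemma symm (h : FormsPattern r p e f) : FormsPattern r (fun n => !p n) f e := by
  refine of_mem_left_iff h.1.symm h.2.2.1 h.2.1 fun x hx => ?_
  rw [union_comm] at hx ⊢
  simpa using h.mem_right_iff hx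

lemma rank_left (h : FormsPattern r p e f) {x : ℕ} (hx : x ∈ e) :
    rank e x = Nat.count (p · = true) (rank (e ∪ f) x) :=
  rank_eq_count subset_union_left _ (fun _ hy => h.mem_left_iff hy) (mem_union_left f hx)

lemma rank_right (h : FormsPattern r p e f) {x : ℕ} (hx : x ∈ f) :
    rank f x = Nat.count (p · = false) (rank (e ∪ f) x) :=
  rank_eq_count subset_union_right _ (fun _ hy => h.mem_right_iff hy) (mem_union_right e hx)

lemma exists_lt (h : FormsPattern r p e f) (hp0 : p 0 = true) (hr : r ≠ 0) :
    ∃ x ∈ e, ∀ y ∈ f, x < y := by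
  have hU : #(e ∪ f) = 2 * r := h.2.2.2.1
  obtain ⟨x, hxU, hx0⟩ := exists_rank_eq (s := e ∪ f) (n := 0) (by omega)
  have hxe : x ∈ e := (h.mem_left_iff hxU).2 (hx0 ▸ hp0)
  refine ⟨x, hxe, fun y hy => ?_⟩
  have hyU := mem_union_right e hy
  have hyx : y ≠ x := fun hyx => disjoint_right.1 h.1 hy (hyx ▸ hxe)
  refine (rank_lt_rank_iff hxU hyU).1 (hx0 ▸ Nat.pos_of_ne_zero fun hy0 => ?_)
  exact hyx (rank_injOn hyU hxU (hy0.trans hx0.symm))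

lemma not_cycle {g : Finset ℕ} (hp0 : p 0 = true) (hr : r ≠ 0) (hef : FormsPattern r p e f)
    (hfg : FormsPattern r p f g) (hge : FormsPattern r p g e) : False := by
  obtain ⟨x, hx, hxf⟩ := hef.exists_lt hp0 hr
  obtain ⟨y, hy, hyg⟩ := hfg.exists_lt hp0 hr
  obtain ⟨z, hz, hze⟩ := hge.exists_lt hp0 hr
  exact lt_asymm ((hxf y hy).trans (hyg z hz)) (hze x hx)

end FormsPattern

/-- Under `FormsPattern r p e f`, position `n` of `p` is the vertex of `e` of index
`Nat.count (p · = true) n` if `p n = true`, and the vertex of `f` of index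
`Nat.count (p · = false) n` otherwise. For three edges `x, y, z` pairwise forming `p`, the
property below is thus transitivity `x i < y j → y j < z k → x i < z k` read off the word. -/
def PatternTransitive (r : ℕ) (p : ℕ → Bool) : Prop :=
  ∀ n₁ < 2 * r, ∀ n₂ < 2 * r, ∀ n₃ < 2 * r, ∀ n₄ < 2 * r,
    p n₁ = true → p n₂ = false → p n₃ = true → p n₄ = false →
    Nat.count (p · = false) n₂ = Nat.count (p · = true) n₃ → n₁ < n₂ → n₃ < n₄ → n₁ < n₄

lemma patternTransitive_of_formsPattern {r : ℕ} {p : ℕ → Bool} {e₁ e₂ e₃ : Finset ℕ}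
    (h₁₂ : FormsPattern r p e₁ e₂) (h₁₃ : FormsPattern r p e₁ e₃)
    (h₂₃ : FormsPattern r p e₂ e₃) : PatternTransitive r p := by
  intro n₁ hn₁ n₂ hn₂ n₃ hn₃ n₄ hn₄ hp₁ hp₂ hp₃ hp₄ hj h₁₂lt h₃₄lt
  obtain ⟨x, hxU, rfl⟩ := exists_rank_eq (h₁₂.2.2.2.1 ▸ hn₁)
  obtain ⟨y, hyU, rfl⟩ := exists_rank_eq (h₁₂.2.2.2.1 ▸ hn₂)
  obtain ⟨y', hy'U, rfl⟩ := exists_rank_eq (h₂₃.2.2.2.1 ▸ hn₃)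
  obtain ⟨z, hzU, rfl⟩ := exists_rank_eq (h₂₃.2.2.2.1 ▸ hn₄)
  have hx := (h₁₂.mem_left_iff hxU).2 hp₁
  have hy := (h₁₂.mem_right_iff hyU).2 hp₂
  have hy' := (h₂₃.mem_left_iff hy'U).2 hp₃
  have hz := (h₂₃.mem_right_iff hzU).2 hp₄
  have hyy' : y = y' := rank_injOn hy hy' <| by rw [h₁₂.rank_right hy, h₂₃.rank_left hy', hj]
  subst hyy'
  have hxz : x < z :=
    ((rank_lt_rank_iff hxU hyU).1 h₁₂lt).trans ((rank_lt_rank_iff hy'U hzU).1 h₃₄lt)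
  have hx₁₃ := mem_union_left e₃ hx
  have hz₁₃ := mem_union_right e₁ hz
  have hrx : rank (e₁ ∪ e₃) x = rank (e₁ ∪ e₂) x :=
    Nat.count_injective ((h₁₃.mem_left_iff hx₁₃).1 hx) hp₁ <| by
      rw [← h₁₃.rank_left hx, ← h₁₂.rank_left hx]
  have hrz : rank (e₁ ∪ e₃) z = rank (e₂ ∪ e₃) z :=
    Nat.count_injective ((h₁₃.mem_right_iff hz₁₃).1 hz) hp₄ <| by
      rw [← h₁₃.rank_right hz, ← h₂₃.rank_right hz]
  rw [← hrx, ← hrz]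
  exact (rank_lt_rank_iff hx₁₃ hz₁₃).2 hxz

section Word

variable {p : ℕ → Bool}

lemma Nat.count_add_of_forall {P : ℕ → Prop} [DecidablePred P] {a t : ℕ}
    (h : ∀ j, a ≤ j → j < a + t → P j) : Nat.count P (a + t) = Nat.count P a + t := by
  rw [Nat.count_add, Nat.count_of_forall fun k hk => h (a + k) (by omega) (by omega)]

lemma Nat.count_add_of_forall_not {P : ℕ → Prop} [DecidablePred P] {a t : ℕ}
    (h : ∀ j, a ≤ j → j < a + t → ¬P j) : Nat.count P (a + t) = Nat.count P a := by
  rw [Nat.count_add, (Nat.count_iff_forall_not).2 fun k hk => h (a + k) (by omega) (by omega),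
    add_zero]

lemma count_true_add_count_false (p : ℕ → Bool) (n : ℕ) :
    Nat.count (p · = true) n + Nat.count (p · = false) n = n := by
  induction n with
  | zero => simp
  | succ n ih => cases h : p n <;> simp [Nat.count_succ, h] <;> omega

lemma count_not_eq_true (p : ℕ → Bool) (n : ℕ) :
    Nat.count (fun k => (!p k) = true) n = Nat.count (p · = false) n := by
  simp

lemma exists_run (p : ℕ → Bool) (b : Bool) {c N : ℕ} (hc : c ≤ N) :
    ∃ t, c + t ≤ N ∧ (∀ j, c ≤ j → j < c + t → p j = b) ∧ (c + t < N → p (c + t) = !b) := by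
  have hex : ∃ s, N ≤ c + s ∨ p (c + s) ≠ b := ⟨N - c, Or.inl (by omega)⟩
  refine ⟨Nat.find hex, ?_, fun j hj hj' => ?_, fun ht => ?_⟩
  · by_contra! hlt
    exact Nat.find_min hex (show N - c < Nat.find hex by omega) (Or.inl (by omega))
  · have := Nat.find_min hex (show j - c < Nat.find hex by omega)
    simpa [show c + (j - c) = j by omega] using (not_or.1 this).2
  · exact Bool.eq_not.2 ((Nat.find_spec hex).resolve_left (by omega))

def IsBlock (p : ℕ → Bool) (a b : ℕ) : Prop :=
  ∃ t, 1 ≤ t ∧ b = a + 2 * t ∧ (∀ j, a ≤ j → j < a + t → p j = p a) ∧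
    (∀ j, a + t ≤ j → j < a + 2 * t → p j = !(p a))

/-- `Splittable r p` is `SplitsFrom p (2 * r) 0` by definition. -/
def SplitsFrom (p : ℕ → Bool) (N a : ℕ) : Prop :=
  ∃ (k : ℕ) (c : ℕ → ℕ), c 0 = a ∧ c k = N ∧ ∀ i < k, IsBlock p (c i) (c (i + 1))

lemma IsBlock.lt {a b : ℕ} (h : IsBlock p a b) : a < b := by
  obtain ⟨t, ht, rfl, -⟩ := h
  omega

lemma IsBlock.of_not {a b : ℕ} (h : IsBlock (fun n => !p n) a b) : IsBlock p a b := by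
  obtain ⟨t, ht, hb, h₁, h₂⟩ := h
  exact ⟨t, ht, hb, fun j hj hj' => by simpa using h₁ j hj hj',
    fun j hj hj' => by simpa using h₂ j hj hj'⟩

lemma IsBlock.two_mul_count {a b : ℕ} (h : IsBlock p a b)
    (ha : 2 * Nat.count (p · = true) a = a) : 2 * Nat.count (p · = true) b = b := by
  obtain ⟨t, -, rfl, h₁, h₂⟩ := h
  rw [two_mul t, ← add_assoc]
  cases hpa : p a
  · rw [Nat.count_add_of_forall fun j hj hj' => by simp [h₂ j hj (by omega), hpa],
      Nat.count_add_of_forall_not fun j hj hj' => by simp [h₁ j hj hj', hpa]]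
    omega
  · rw [Nat.count_add_of_forall_not fun j hj hj' => by simp [h₂ j hj (by omega), hpa],
      Nat.count_add_of_forall fun j hj hj' => by simp [h₁ j hj hj', hpa]]
    omega

lemma SplitsFrom.of_isBlock {N a b : ℕ} (hab : IsBlock p a b) (hb : SplitsFrom p N b) :
    SplitsFrom p N a := by
  obtain ⟨k, c, hc0, hck, hc⟩ := hb
  refine ⟨k + 1, fun | 0 => a | i + 1 => c i, rfl, hck, fun i hi => ?_⟩
  cases i with
  | zero => simpa [hc0] using hab
  | succ i => exact hc i (by omega)

lemma splitsFrom_of_forall_exists_isBlock {N : ℕ}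
    (h : ∀ c < N, 2 * Nat.count (p · = true) c = c → ∃ d ≤ N, IsBlock p c d)
    (c : ℕ) (hc : c ≤ N) (hbal : 2 * Nat.count (p · = true) c = c) : SplitsFrom p N c := by
  rcases hc.lt_or_eq with hlt | rfl
  · obtain ⟨d, hd, hcd⟩ := h c hlt hbal
    have := hcd.lt
    exact (splitsFrom_of_forall_exists_isBlock h d hd (hcd.two_mul_count hbal)).of_isBlock hcd
  · exact ⟨0, fun _ => c, rfl, rfl, by simp⟩
termination_by N - c

end Word

/-- If the run of `true`s starting at a balanced prefix `c` were longer than the following run of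
`false`s (`u < t`), then with `m` letters of each kind before `c`, `q = c + t + u` and `q + s` the
next `false` after `q`, the positions `q`, `q + s`, `c + u`, `c + t` (of indices `m + t`, `m + u`,
`m + u`, `m`) would contradict transitivity. -/
lemma PatternTransitive.le_of_runs {r : ℕ} {p : ℕ → Bool} (hT : PatternTransitive r p)
    (hA : Nat.count (p · = true) (2 * r) = r) {c t u : ℕ}
    (hbal : 2 * Nat.count (p · = true) c = c) (hct : c + t < 2 * r) (hu : c + t + u ≤ 2 * r)
    (hrunA : ∀ j, c ≤ j → j < c + t → p j = true) (hpct : p (c + t) = false)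
    (hrunB : ∀ j, c + t ≤ j → j < c + t + u → p j = false)
    (hendB : c + t + u < 2 * r → p (c + t + u) = true) : t ≤ u := by
  by_contra! htu
  have hB := count_true_add_count_false p (2 * r)
  have hBc := count_true_add_count_false p c
  set m := Nat.count (p · = true) c
  set q := c + t + u
  have hAq : Nat.count (p · = true) q = m + t :=
    (Nat.count_add_of_forall_not fun j hj hj' => by simp [hrunB j hj hj']).trans
      (Nat.count_add_of_forall hrunA)
  have hBq : Nat.count (p · = false) q = m + u := by
    rw [Nat.count_add_of_forall hrunB,
      Nat.count_add_of_forall_not fun j hj hj' => by simp [hrunA j hj hj']]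
    omega
  have hq : q < 2 * r := by
    by_contra! hq
    rw [show q = 2 * r by omega] at hAq hBq
    omega
  have hpq : p q = true := hendB hq
  obtain ⟨s, hsN, hrunA', hendA'⟩ := exists_run p true hq.le
  have hBs : Nat.count (p · = false) (q + s) = m + u :=
    (Nat.count_add_of_forall_not fun j hj hj' => by simp [hrunA' j hj hj']).trans hBq
  have hqs : q + s < 2 * r := by
    by_contra! hqs
    have := Nat.count_monotone (p · = true) hq.le
    rw [show q + s = 2 * r by omega] at hBs
    omega
  have hs : s ≠ 0 := by rintro rfl; simp [hpq] at hendA'; omega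
  have hAu : Nat.count (p · = true) (c + u) = m + u :=
    Nat.count_add_of_forall fun j hj hj' => hrunA j hj (by omega)
  have := hT q hq (q + s) hqs (c + u) (by omega) (c + t) hct hpq (hendA' hqs)
    (hrunA (c + u) (by omega) (by omega)) hpct (hBs.trans hAu.symm) (by omega) (by omega)
  omega

lemma exists_isBlock_of_eq_true {r : ℕ} {p : ℕ → Bool} (hA : Nat.count (p · = true) (2 * r) = r)
    (hT : PatternTransitive r p) {c : ℕ} (hc : c < 2 * r)
    (hbal : 2 * Nat.count (p · = true) c = c) (hpc : p c = true) :
    ∃ d ≤ 2 * r, IsBlock p c d := by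
  obtain ⟨t, htN, hrunA, hendA⟩ := exists_run p true hc.le
  have hct : c + t < 2 * r := by
    by_contra! hct
    have hAt : Nat.count (p · = true) (2 * r) = Nat.count (p · = true) c + t := by
      rw [← Nat.count_add_of_forall hrunA, show c + t = 2 * r by omega]
    omega
  have ht : 1 ≤ t := Nat.one_le_iff_ne_zero.2 <| by rintro rfl; simp [hpc] at hendA; omega
  obtain ⟨u, hu, hrunB, hendB⟩ := exists_run p false hct.le
  have htu := hT.le_of_runs hA hbal hct hu hrunA (hendA hct) hrunB hendB
  refine ⟨c + 2 * t, by omega, t, ht, rfl, fun j hj hj' => ?_, fun j hj hj' => ?_⟩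
  · rw [hpc, hrunA j hj hj']
  · rw [hpc, hrunB j hj (by omega)]; rfl

lemma splittable_of_patternTransitive {r : ℕ} {p : ℕ → Bool}
    (hA : Nat.count (p · = true) (2 * r) = r) (hT : PatternTransitive r p)
    (hT' : PatternTransitive r (fun n => !p n)) : Splittable r p := by
  refine splitsFrom_of_forall_exists_isBlock (fun c hc hbal => ?_) 0 (Nat.zero_le _) (by simp)
  cases hpc : p c
  · have hA' := count_true_add_count_false p (2 * r)
    have hbal' := count_true_add_count_false p c
    rw [← count_not_eq_true] at hA' hbal'
    obtain ⟨d, hd, hcd⟩ :=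
      exists_isBlock_of_eq_true (by omega) hT' hc (by omega) (by simp [hpc])
    exact ⟨d, hd, hcd.of_not⟩
  · exact exists_isBlock_of_eq_true hA hT hc hbal hpc

lemma exists_transitive_triple {α : Type*} {R : α → α → Prop} {a b c : α}
    (hcycle : ∀ x y z, R x y → R y z → R z x → False)
    (hab : R a b ∨ R b a) (hac : R a c ∨ R c a) (hbc : R b c ∨ R c b) :
    ∃ x y z, R x y ∧ R x z ∧ R y z := by
  rcases hab with hab | hba <;> rcases hac with hac | hca <;> rcases hbc with hbc | hcb
  exacts [⟨a, b, c, hab, hac, hbc⟩, ⟨a, c, b, hac, hab, hcb⟩, (hcycle a b c hab hbc hca).elim,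
    ⟨c, a, b, hca, hcb, hab⟩, ⟨b, a, c, hba, hbc, hac⟩, (hcycle a c b hac hcb hba).elim,
    ⟨b, c, a, hbc, hba, hca⟩, ⟨c, b, a, hcb, hca, hba⟩]

theorem stmt_4_general (r : ℕ) (p : ℕ → Bool) (hp0 : p 0 = true)
    (hcount : ((Finset.range (2 * r)).filter (fun i => p i = true)).card = r)
    (hns : ¬ Splittable r p) :
    ∀ M : Finset (Finset ℕ),
      (∀ e ∈ M, e.card = r) →
      (∀ e ∈ M, ∀ f ∈ M, e ≠ f → Disjoint e f) →
      (∀ e ∈ M, ∀ f ∈ M, e ≠ f → FormsPattern r p e f ∨ FormsPattern r p f e) →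
      M.card ≤ 2 := by
  intro M _ _ hforms
  have hr : r ≠ 0 := by
    rintro rfl
    exact hns ⟨0, fun _ => 0, rfl, rfl, by simp⟩
  by_contra! hM
  obtain ⟨a, ha, b, hb, c, hc, hab, hac, hbc⟩ := two_lt_card.1 hM
  obtain ⟨e₁, e₂, e₃, h₁₂, h₁₃, h₂₃⟩ :=
    exists_transitive_triple (R := FormsPattern r p)
      (fun _ _ _ => FormsPattern.not_cycle hp0 hr)
      (hforms a ha b hb hab) (hforms a ha c hc hac) (hforms b hb c hc hbc)
  exact hns <| splittable_of_patternTransitive (by rwa [Nat.count_eq_card_filter_range])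
    (patternTransitive_of_formsPattern h₁₂ h₁₃ h₂₃)
    (patternTransitive_of_formsPattern h₂₃.symm h₁₃.symm h₁₂.symm)

/-- If an `r`-pattern `P` is not splittable then every `P`-clique has size at most 2;
in particular, no three pairwise disjoint edges can pairwise form pattern `P`. -/
theorem stmt_4 (r : ℕ) (hr : 2 ≤ r) (p : ℕ → Bool) (hp0 : p 0 = true)
    (hcount : ((Finset.range (2 * r)).filter (fun i => p i = true)).card = r)
    (hns : ¬ Splittable r p) :
    ∀ M : Finset (Finset ℕ),
      (∀ e ∈ M, e.card = r) →
      (∀ e ∈ M, ∀ f ∈ M, e ≠ f → Disjoint e f) →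
      (∀ e ∈ M, ∀ f ∈ M, e ≠ f → FormsPattern r p e f ∨ FormsPattern r p f e) →
      M.card ≤ 2 :=
  stmt_4_general r p hp0 hcount hns
end

section
/- For every r ≥ 2, the total sum of maturities over all 3^{r-1} splittable r-patterns equals (3^{r-2} - 1)/2. -/
/-- Extend a word on `Fin (2*r)` to `ℕ` by `false`. -/
def extWord (r : ℕ) (p : Fin (2 * r) → Bool) : ℕ → Bool :=
  fun j => if h : j < 2 * r then p ⟨j, h⟩ else false

/-- Length of the last maximal run of a word of length `2r`: the number of positions
`j < 2r` from which onward all letters agree with the last letter. -/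
def lastRunLen (r : ℕ) (w : ℕ → Bool) : ℕ :=
  ((Finset.range (2 * r)).filter
    (fun j => ∀ i, j ≤ i → i < 2 * r → w i = w (2 * r - 1))).card

/-- The maturity of a pattern: the length of its last maximal run minus 2
(truncated at 0). -/
def maturity (r : ℕ) (w : ℕ → Bool) : ℕ := lastRunLen r w - 2

open Finset

def blockWord : List (Bool × ℕ) → ℕ → Bool
  | [], _ => false
  | (s, t) :: l, j => if j < t then s else if j < 2 * t then !s else blockWord l (j - 2 * t)

def blockSize (l : List (Bool × ℕ)) : ℕ := (l.map Prod.snd).sum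

def PosBlocks (l : List (Bool × ℕ)) : Prop := ∀ b ∈ l, 0 < b.2

def lastSize (l : List (Bool × ℕ)) : ℕ := (l.getLastD (false, 0)).2

@[simp] lemma blockSize_nil : blockSize [] = 0 := rfl

@[simp] lemma blockSize_cons (b : Bool × ℕ) (l : List (Bool × ℕ)) :
    blockSize (b :: l) = b.2 + blockSize l := by
  simp [blockSize]

@[simp] lemma blockSize_append (l₁ l₂ : List (Bool × ℕ)) :
    blockSize (l₁ ++ l₂) = blockSize l₁ + blockSize l₂ := by
  simp [blockSize]

@[simp] lemma posBlocks_nil : PosBlocks [] := by simp [PosBlocks]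

@[simp] lemma posBlocks_cons {b : Bool × ℕ} {l : List (Bool × ℕ)} :
    PosBlocks (b :: l) ↔ 0 < b.2 ∧ PosBlocks l :=
  List.forall_mem_cons

section blockWord

variable {s : Bool} {t j : ℕ} {l : List (Bool × ℕ)}

lemma blockWord_cons_of_lt (h : j < t) : blockWord ((s, t) :: l) j = s := by
  simp [blockWord, h]

lemma blockWord_cons_of_le_of_lt (h₁ : t ≤ j) (h₂ : j < 2 * t) :
    blockWord ((s, t) :: l) j = !s := by
  simp [blockWord, h₂, not_lt.2 h₁]

lemma blockWord_cons_add (i : ℕ) : blockWord ((s, t) :: l) (i + 2 * t) = blockWord l i := by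
  simp only [blockWord, if_neg (show ¬i + 2 * t < t by omega),
    if_neg (show ¬i + 2 * t < 2 * t by omega), Nat.add_sub_cancel]

lemma blockWord_of_le (h : 2 * blockSize l ≤ j) : blockWord l j = false := by
  induction l generalizing j with
  | nil => rfl
  | cons b l ih =>
    obtain ⟨s, t⟩ := b
    simp only [blockSize_cons] at h
    obtain ⟨i, rfl⟩ := Nat.exists_eq_add_of_le' (show 2 * t ≤ j by omega)
    rw [blockWord_cons_add, ih (by omega)]

lemma blockWord_append (l₁ l₂ : List (Bool × ℕ)) (i : ℕ) :
    blockWord (l₁ ++ l₂) i = if i < 2 * blockSize l₁ then blockWord l₁ i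
      else blockWord l₂ (i - 2 * blockSize l₁) := by
  induction l₁ generalizing i with
  | nil => simp
  | cons b l₁ ih =>
    obtain ⟨s, t⟩ := b
    simp only [List.cons_append, blockWord, ih, blockSize_cons]
    split_ifs <;> first | rfl | omega | (congr 1; omega)

lemma blockWord_cons_ne_nil (ht : 0 < t) : blockWord ((s, t) :: l) ≠ blockWord [] := by
  intro h
  have h₀ := congrFun h 0
  have h₁ := congrFun h t
  rw [blockWord_cons_of_lt ht] at h₀
  rw [blockWord_cons_of_le_of_lt le_rfl (by omega), h₀] at h₁
  exact Bool.noConfusion h₁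

lemma blockWord_injOn : Set.InjOn blockWord {l | PosBlocks l} := by
  intro l hl l' hl' h
  induction l generalizing l' with
  | nil =>
    obtain _ | ⟨⟨s', t'⟩, l'⟩ := l'
    · rfl
    · exact absurd h.symm (blockWord_cons_ne_nil (posBlocks_cons.1 hl').1)
  | cons b l ih =>
    obtain ⟨s, t⟩ := b
    obtain ⟨ht, hlt⟩ := posBlocks_cons.1 hl
    obtain _ | ⟨⟨s', t'⟩, l'⟩ := l'
    · exact absurd h (blockWord_cons_ne_nil ht)
    obtain ⟨ht', hlt'⟩ := posBlocks_cons.1 hl'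
    have hs : s = s' := by
      simpa [blockWord_cons_of_lt ht, blockWord_cons_of_lt ht'] using congrFun h 0
    subst hs
    -- the first block ends where the word first differs from its first letter
    have htt : t = t' := by
      by_contra hne
      rcases Nat.lt_or_gt_of_ne hne with hless | hless
      · have := congrFun h t
        rw [blockWord_cons_of_le_of_lt le_rfl (by omega), blockWord_cons_of_lt hless] at this
        simp at this
      · have := congrFun h t'
        rw [blockWord_cons_of_lt hless, blockWord_cons_of_le_of_lt le_rfl (by omega)] at this
        simp at this
    subst htt
    refine congrArg _ (ih hlt hlt' (funext fun j => ?_))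
    simpa only [blockWord_cons_add] using congrFun h (j + 2 * t)

end blockWord

section Splittable

variable {r t : ℕ} {w : ℕ → Bool}

lemma Splittable.cons (ht : 0 < t) (hw₁ : ∀ j < t, w j = w 0)
    (hw₂ : ∀ j, t ≤ j → j < 2 * t → w j = !w 0)
    (h : Splittable r fun j => w (j + 2 * t)) :
    Splittable (t + r) w := by
  obtain ⟨k, c, hc₀, hck, hc⟩ := h
  refine ⟨k + 1, fun | 0 => 0 | i + 1 => c i + 2 * t, rfl, by dsimp only; omega, ?_⟩
  rintro (_ | i) hi
  · refine ⟨t, ht, by dsimp only; omega, fun j _ hj => ?_, fun j hj₁ hj₂ => ?_⟩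
    · dsimp only at hj ⊢
      exact hw₁ j (by omega)
    · dsimp only at hj₁ hj₂ ⊢
      exact hw₂ j (by omega) (by omega)
  obtain ⟨u, hu, hcu, h₁, h₂⟩ := hc i (by omega)
  refine ⟨u, hu, by dsimp only; omega, fun j hj₁ hj₂ => ?_, fun j hj₁ hj₂ => ?_⟩ <;>
    dsimp only at hj₁ hj₂ ⊢ <;>
    obtain ⟨j, rfl⟩ := Nat.exists_eq_add_of_le' (show 2 * t ≤ j by omega)
  · exact h₁ j (by omega) (by omega)
  · exact h₂ j (by omega) (by omega)

lemma Splittable.exists_cons (h : Splittable r w) (hr : r ≠ 0) :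
    ∃ t, 0 < t ∧ t ≤ r ∧ (∀ j < t, w j = w 0) ∧
      (∀ j, t ≤ j → j < 2 * t → w j = !w 0) ∧
      Splittable (r - t) fun j => w (j + 2 * t) := by
  obtain ⟨k, c, hc₀, hck, hc⟩ := h
  have hmono : ∀ i j, i ≤ j → j ≤ k → c i ≤ c j := by
    intro i j hij hjk
    induction j, hij using Nat.le_induction with
    | base => rfl
    | succ j hij ih =>
      obtain ⟨u, -, hcu, -⟩ := hc j (by omega)
      have := ih (by omega)
      omega
  obtain _ | k := k
  · omega
  obtain ⟨t, ht, hct, hw₁, hw₂⟩ := hc 0 (by omega)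
  simp only [zero_add, hc₀] at hct hw₁ hw₂
  have hc₁ : ∀ i ≤ k, 2 * t ≤ c (i + 1) := fun i hi =>
    hct ▸ hmono 1 (i + 1) (by omega) (by omega)
  have hck₁ := hc₁ k le_rfl
  refine ⟨t, ht, by omega, fun j hj => hw₁ j (by omega) hj, hw₂, k,
    fun i => c (i + 1) - 2 * t, by simp [hct], by beta_reduce; omega, fun i hi => ?_⟩
  obtain ⟨u, hu, hcu, h₁, h₂⟩ := hc (i + 1) (by omega)
  have hci := hc₁ i (by omega)
  have hshift : c (i + 1) - 2 * t + 2 * t = c (i + 1) := by omega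
  refine ⟨u, hu, by beta_reduce; omega, fun j hj₁ hj₂ => ?_, fun j hj₁ hj₂ => ?_⟩ <;>
    beta_reduce at hj₁ hj₂ ⊢ <;> rw [hshift]
  · exact h₁ _ (by omega) (by omega)
  · exact h₂ _ (by omega) (by omega)

lemma Splittable.exists_blockWord_eq (h : Splittable r w)
    (hw : ∀ j, 2 * r ≤ j → w j = false) :
    ∃ l, PosBlocks l ∧ blockSize l = r ∧ blockWord l = w := by
  induction r using Nat.strong_induction_on generalizing w with
  | _ r ih =>
  rcases eq_or_ne r 0 with rfl | hr
  · exact ⟨[], posBlocks_nil, rfl, funext fun j => (hw j (by omega)).symm⟩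
  obtain ⟨t, ht, htr, hw₁, hw₂, hs⟩ := h.exists_cons hr
  obtain ⟨l, hl, hsize, hwl⟩ := ih (r - t) (by omega) hs fun j hj => hw _ (by omega)
  refine ⟨(w 0, t) :: l, posBlocks_cons.2 ⟨ht, hl⟩,
    by simp only [blockSize_cons, hsize]; omega, funext fun j => ?_⟩
  rcases lt_or_ge j t with h₁ | h₁
  · rw [blockWord_cons_of_lt h₁, hw₁ j h₁]
  rcases lt_or_ge j (2 * t) with h₂ | h₂
  · rw [blockWord_cons_of_le_of_lt h₁ h₂, hw₂ j h₁ h₂]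
  obtain ⟨i, rfl⟩ := Nat.exists_eq_add_of_le' h₂
  rw [blockWord_cons_add, hwl]

end Splittable

lemma splittable_blockWord {l : List (Bool × ℕ)} (hl : PosBlocks l) :
    Splittable (blockSize l) (blockWord l) := by
  induction l with
  | nil => exact ⟨0, fun _ => 0, rfl, rfl, by simp⟩
  | cons b l ih =>
    obtain ⟨s, t⟩ := b
    obtain ⟨ht, hl⟩ := posBlocks_cons.1 hl
    rw [blockSize_cons]
    refine Splittable.cons ht (fun j hj => ?_) (fun j hj₁ hj₂ => ?_) ?_
    · rw [blockWord_cons_of_lt hj, blockWord_cons_of_lt ht]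
    · rw [blockWord_cons_of_le_of_lt hj₁ hj₂, blockWord_cons_of_lt ht]
    · simpa only [blockWord_cons_add] using ih hl

lemma lastRunLen_blockWord {l : List (Bool × ℕ)} (hl : PosBlocks l) :
    lastRunLen (blockSize l) (blockWord l) = lastSize l := by
  obtain rfl | ⟨L, ⟨s, t⟩, rfl⟩ := l.eq_nil_or_concat'
  · simp [lastRunLen, lastSize]
  have ht : 0 < t := hl (s, t) (by simp)
  set n := 2 * blockSize L
  have hlast : ∀ j, n + t ≤ j → j < n + 2 * t → blockWord (L ++ [(s, t)]) j = !s := by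
    intro j hj₁ hj₂
    rw [blockWord_append, if_neg (by omega), blockWord_cons_of_le_of_lt (by omega) (by omega)]
  have hbefore : blockWord (L ++ [(s, t)]) (n + t - 1) = s := by
    rw [blockWord_append, if_neg (by omega), blockWord_cons_of_lt (by omega)]
  have hsize : 2 * blockSize (L ++ [(s, t)]) = n + 2 * t := by
    simp only [blockSize_append, blockSize_cons, blockSize_nil, n]
    ring
  rw [lastRunLen, hsize, hlast _ (by omega) (by omega)]
  convert Nat.card_Ico (n + t) (n + 2 * t) using 2
  · ext j
    simp only [mem_filter, mem_range, mem_Ico]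
    refine ⟨fun ⟨hj, hall⟩ => ⟨?_, hj⟩,
      fun ⟨hj₁, hj₂⟩ => ⟨hj₂, fun i hi₁ hi₂ => hlast i (by omega) hi₂⟩⟩
    by_contra hj'
    have := hall (n + t - 1) (by omega) (by omega)
    rw [hbefore] at this
    simp at this
  · rw [lastSize, List.getLastD_concat]
    omega

def blockLists : ℕ → Finset (List (Bool × ℕ))
  | 0 => {[]}
  | n + 1 => (univ : Finset (Fin (n + 1) × Bool)).biUnion fun ms =>
      (blockLists ms.1).image ((ms.2, n + 1 - ms.1) :: ·)

lemma mem_blockLists {n : ℕ} {l : List (Bool × ℕ)} :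
    l ∈ blockLists n ↔ PosBlocks l ∧ blockSize l = n := by
  induction n using Nat.strong_induction_on generalizing l with
  | _ n ih =>
  rcases n with _ | n
  · rcases l with _ | ⟨⟨s, t⟩, l⟩
    · simp [blockLists]
    · simp only [blockLists, mem_singleton, reduceCtorEq, false_iff, not_and, posBlocks_cons,
        blockSize_cons]
      omega
  simp only [blockLists, mem_biUnion, mem_univ, true_and, mem_image, Prod.exists]
  constructor
  · rintro ⟨m, s, l, hl, rfl⟩
    obtain ⟨hl, hsize⟩ := ih m m.2 |>.1 hl
    have := m.isLt
    simp only [posBlocks_cons, blockSize_cons, hl, hsize, and_true]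
    omega
  · rcases l with _ | ⟨⟨s, t⟩, l⟩
    · simp
    · simp only [posBlocks_cons, blockSize_cons, List.cons.injEq, Prod.mk.injEq]
      rintro ⟨⟨ht, hl⟩, hsize⟩
      exact ⟨⟨blockSize l, by omega⟩, s, l, (ih _ (by omega)).2 ⟨hl, rfl⟩,
        ⟨rfl, by dsimp only; omega⟩, rfl⟩

lemma sum_blockLists_succ {M : Type*} [AddCommMonoid M] (g : List (Bool × ℕ) → M) (n : ℕ) :
    ∑ l ∈ blockLists (n + 1), g l =
      ∑ m ∈ range (n + 1), ∑ s : Bool, ∑ l ∈ blockLists m, g ((s, n + 1 - m) :: l) := by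
  rw [blockLists, sum_biUnion, ← Fin.sum_univ_eq_sum_range
    (fun m => ∑ s : Bool, ∑ l ∈ blockLists m, g ((s, n + 1 - m) :: l)),
    ← Fintype.sum_prod_type']
  · exact sum_congr rfl fun ms _ => sum_image fun _ _ _ _ h => List.cons_injective h
  · intro ms _ ms' _ hne
    simp only [Function.onFun, disjoint_left, mem_image, not_exists, not_and]
    rintro _ ⟨l, -, rfl⟩ l' - h
    simp only [List.cons.injEq, Prod.mk.injEq] at h
    exact hne (Prod.ext (Fin.ext (by omega)) h.1.1.symm)

def totalMaturity (s : Bool) (n : ℕ) : ℕ :=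
  ∑ l ∈ blockLists n, if blockWord l 0 = s then lastSize l - 2 else 0

lemma sum_blockLists_eq_totalMaturity_add (n : ℕ) :
    ∑ l ∈ blockLists n, (lastSize l - 2) = totalMaturity true n + totalMaturity false n := by
  rw [totalMaturity, totalMaturity, ← sum_add_distrib]
  refine sum_congr rfl fun l _ => ?_
  cases blockWord l 0 <;> simp

lemma lastSize_cons {l : List (Bool × ℕ)} (b : Bool × ℕ) (hl : l ≠ []) :
    lastSize (b :: l) = lastSize l := by
  obtain ⟨L, c, rfl⟩ := (l.eq_nil_or_concat').resolve_left hl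
  rw [← List.cons_append, lastSize, lastSize, List.getLastD_concat, List.getLastD_concat]

lemma totalMaturity_succ (s : Bool) (n : ℕ) :
    totalMaturity s (n + 1) =
      (n - 1) + ∑ m ∈ range n, (totalMaturity true (m + 1) + totalMaturity false (m + 1)) := by
  rw [totalMaturity, sum_blockLists_succ, sum_range_succ', add_comm]
  congr 1
  · cases s <;> simp [blockLists, blockWord, lastSize]
  · refine sum_congr rfl fun m hm => ?_
    rw [← sum_blockLists_eq_totalMaturity_add, Fintype.sum_bool]
    have hn : 0 < n + 1 - (m + 1) := by rw [mem_range] at hm; omega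
    have hcons : ∀ s' : Bool, ∀ l ∈ blockLists (m + 1),
        (if blockWord ((s', n + 1 - (m + 1)) :: l) 0 = s
          then lastSize ((s', n + 1 - (m + 1)) :: l) - 2 else 0) =
        if s' = s then lastSize l - 2 else 0 := by
      intro s' l hl
      have hl : l ≠ [] := by
        rintro rfl
        simp [mem_blockLists] at hl
      rw [blockWord_cons_of_lt hn, lastSize_cons _ hl]
    rw [sum_congr rfl (hcons true), sum_congr rfl (hcons false)]
    cases s <;> simp

lemma totalMaturity_true_eq_false (n : ℕ) : totalMaturity true n = totalMaturity false n := by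
  rcases n with _ | n
  · simp [totalMaturity, blockLists, blockWord, lastSize]
  · rw [totalMaturity_succ, totalMaturity_succ]

lemma totalMaturity_succ_succ_succ (n : ℕ) :
    totalMaturity true (n + 3) = 3 * totalMaturity true (n + 2) + 1 := by
  have h₃ := totalMaturity_succ true (n + 2)
  have h₂ := totalMaturity_succ true (n + 1)
  rw [sum_range_succ] at h₃
  simp only [← totalMaturity_true_eq_false] at h₃ h₂
  show totalMaturity true (n + 2 + 1) = 3 * totalMaturity true (n + 1 + 1) + 1
  omega

lemma two_mul_totalMaturity : ∀ n, 2 * totalMaturity true n = 3 ^ (n - 2) - 1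
  | 0 => by simp [totalMaturity, blockLists, blockWord]
  | 1 => by simp [totalMaturity_succ true 0]
  | 2 => by simp [totalMaturity_succ _ 1, totalMaturity_succ _ 0]
  | n + 3 => by
    have ih := two_mul_totalMaturity (n + 2)
    have hpow : 3 ^ (n + 3 - 2) = 3 * 3 ^ (n + 2 - 2) := by
      rw [show n + 3 - 2 = n + 2 - 2 + 1 by omega, pow_succ, mul_comm]
    have hpos := Nat.one_le_pow (n + 2 - 2) 3 (by norm_num)
    rw [totalMaturity_succ_succ_succ, hpow]
    omega

lemma extWord_of_le {r j : ℕ} (p : Fin (2 * r) → Bool) (hj : 2 * r ≤ j) :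
    extWord r p j = false := by
  simp [extWord, not_lt.2 hj]

lemma extWord_blockWord {r : ℕ} {l : List (Bool × ℕ)} (hl : blockSize l = r) :
    extWord r (fun j => blockWord l j) = blockWord l := by
  funext j
  by_cases hj : j < 2 * r
  · simp [extWord, hj]
  · rw [extWord_of_le _ (not_lt.1 hj), blockWord_of_le (by omega)]

open Classical in
lemma sum_splittable_extWord {M : Type*} [AddCommMonoid M] (r : ℕ) (f : (ℕ → Bool) → M) :
    ∑ p : Fin (2 * r) → Bool, (if Splittable r (extWord r p) then f (extWord r p) else 0) =
      ∑ l ∈ blockLists r, f (blockWord l) := by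
  have himage : univ.filter (fun p => Splittable r (extWord r p)) =
      (blockLists r).image fun l (j : Fin (2 * r)) => blockWord l j := by
    ext p
    simp only [mem_filter, mem_univ, true_and, mem_image, mem_blockLists]
    constructor
    · intro hp
      obtain ⟨l, hl, hsize, hlp⟩ := hp.exists_blockWord_eq fun j => extWord_of_le p
      exact ⟨l, ⟨hl, hsize⟩, funext fun j => by simp [hlp, extWord]⟩
    · rintro ⟨l, ⟨hl, rfl⟩, rfl⟩
      rw [extWord_blockWord rfl]
      exact splittable_blockWord hl
  have hinj : Set.InjOn (fun l (j : Fin (2 * r)) => blockWord l j) (blockLists r) := by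
    intro l hl l' hl' h
    rw [mem_coe, mem_blockLists] at hl hl'
    refine blockWord_injOn hl.1 hl'.1 ?_
    rw [← extWord_blockWord hl.2, ← extWord_blockWord hl'.2]
    exact congrArg (extWord r) h
  rw [← sum_filter, himage, sum_image hinj]
  exact sum_congr rfl fun l hl => by rw [extWord_blockWord (mem_blockLists.1 hl).2]

open Classical in
theorem stmt_7_general (r : ℕ) :
    2 * ∑ p : Fin (2 * r) → Bool,
        (if extWord r p 0 = true ∧ Splittable r (extWord r p)
          then maturity r (extWord r p) else 0)
      = 3 ^ (r - 2) - 1 := by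
  rw [← two_mul_totalMaturity]
  congr 1
  calc _ = ∑ p : Fin (2 * r) → Bool, if Splittable r (extWord r p) then
          (if extWord r p 0 = true then maturity r (extWord r p) else 0) else 0 :=
        sum_congr rfl fun p _ => by by_cases h : Splittable r (extWord r p) <;> simp [h]
    _ = ∑ l ∈ blockLists r, if blockWord l 0 = true then maturity r (blockWord l) else 0 :=
        sum_splittable_extWord r fun w => if w 0 = true then maturity r w else 0
    _ = totalMaturity true r := sum_congr rfl fun l hl => by
        obtain ⟨hpos, rfl⟩ := mem_blockLists.1 hl
        rw [maturity, lastRunLen_blockWord hpos]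

open Classical in
theorem stmt_7 (r : ℕ) (hr : 2 ≤ r) :
    2 * ∑ p : Fin (2 * r) → Bool,
        (if extWord r p 0 = true ∧ Splittable r (extWord r p)
          then maturity r (extWord r p) else 0)
      = 3 ^ (r - 2) - 1 :=
  stmt_7_general r
end

section
/- Erdős–Szekeres theorem for ordered 2-matchings: let ℓ, s, w be positive integers and n ≥ ℓ·s·w + 1. Then every ordered 2-uniform matching of size n on [2n] contains ℓ+1 edges pairwise forming an alignment (a line), or s+1 edges pairwise forming a nesting (a stack), or w+1 edges pairwise forming a crossing (a wave). -/
/-!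
Two distinct edges of a matching are aligned, nested or crossing in some order, and alignment
and nesting are strict partial orders. By a Mirsky-type argument (give each element the length
of the longest `R`-chain below it; equal heights force incomparability), a finite set that is a
chain for `R ⊔ Q`, with `R` a strict order and more than `m * k` elements, contains an `R`-chain
of size `m + 1` or a `Q`-chain of size `k + 1`. Apply this to alignment versus
"nesting or crossing" with `m * k = ℓ * (s * w)`, and then to nesting versus crossing inside the
`s * w + 1` edges it may return.
-/

/-- Edges `e, f` (pairs with first coordinate the left endpoint) form an alignment:
pattern `AABB`. -/
def EdgeAlignment (e f : ℕ × ℕ) : Prop := e.1 < e.2 ∧ e.2 < f.1 ∧ f.1 < f.2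

/-- Edges `e, f` form a nesting: pattern `ABBA`. -/
def Nesting (e f : ℕ × ℕ) : Prop := e.1 < f.1 ∧ f.1 < f.2 ∧ f.2 < e.2

/-- Edges `e, f` form a crossing: pattern `ABAB`. -/
def Crossing (e f : ℕ × ℕ) : Prop := e.1 < f.1 ∧ f.1 < e.2 ∧ e.2 < f.2

section ChainHeight

open Finset

variable {α : Type*} (R : α → α → Prop)

open Classical in
noncomputable def chainHeightBelow (S : Finset α) (e : α) : ℕ :=
  ((S.filter (R · e)).powerset.filter (fun T : Finset α => IsChain R (T : Set α))).sup card

variable {R}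

theorem card_le_chainHeightBelow {S T : Finset α} {e : α} (hTS : T ⊆ S)
    (hTe : ∀ g ∈ T, R g e) (hT : IsChain R (T : Set α)) :
    T.card ≤ chainHeightBelow R S e := by
  classical
  refine le_sup (f := card) (mem_filter.2 ⟨mem_powerset.2 fun g hg => ?_, hT⟩)
  exact mem_filter.2 ⟨hTS hg, hTe g hg⟩

theorem exists_isChain_card_eq_chainHeightBelow (S : Finset α) (e : α) :
    ∃ T ⊆ S, (∀ g ∈ T, R g e) ∧ IsChain R (T : Set α) ∧
      T.card = chainHeightBelow R S e := by
  classical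
  obtain ⟨T, hT, hcard⟩ := exists_mem_eq_sup
    ((S.filter (R · e)).powerset.filter (fun T : Finset α => IsChain R (T : Set α)))
    ⟨∅, mem_filter.2 ⟨empty_mem_powerset _, by simp⟩⟩ card
  obtain ⟨hTsub, hchain⟩ := mem_filter.1 hT
  have hTsub := mem_powerset.1 hTsub
  refine ⟨T, hTsub.trans (filter_subset _ _), fun g hg => (mem_filter.1 (hTsub hg)).2,
    hchain, ?_⟩
  rw [chainHeightBelow, hcard]

theorem chainHeightBelow_lt_of_rel [IsTrans α R] [Std.Irrefl R] {S : Finset α} {e f : α}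
    (he : e ∈ S) (hef : R e f) : chainHeightBelow R S e < chainHeightBelow R S f := by
  classical
  obtain ⟨T, hTS, hTe, hT, hcard⟩ := exists_isChain_card_eq_chainHeightBelow (R := R) S e
  have heT : e ∉ T := fun h => irrefl e (hTe e h)
  have hchain : IsChain R ((insert e T : Finset α) : Set α) := by
    rw [coe_insert]
    exact hT.insert fun g hg _ => Or.inr (hTe g hg)
  have hle := card_le_chainHeightBelow (insert_subset he hTS)
    (fun g hg => (mem_insert.1 hg).elim (· ▸ hef) fun hg => trans_of R (hTe g hg) hef) hchain
  rw [card_insert_of_notMem heT, hcard] at hle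
  exact hle

theorem exists_isChain_of_mul_lt_card [IsTrans α R] [Std.Irrefl R] {Q : α → α → Prop}
    {S : Finset α} (hS : IsChain (R ⊔ Q) (S : Set α)) {m k : ℕ} (hcard : m * k < S.card) :
    (∃ T ⊆ S, T.card = m + 1 ∧ IsChain R (T : Set α)) ∨
      ∃ T ⊆ S, T.card = k + 1 ∧ IsChain Q (T : Set α) := by
  classical
  by_cases htall : ∃ e ∈ S, m ≤ chainHeightBelow R S e
  · obtain ⟨e, he, hm⟩ := htall
    obtain ⟨T, hTS, hTe, hT, hTcard⟩ := exists_isChain_card_eq_chainHeightBelow (R := R) S e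
    obtain ⟨U, hUT, hUcard⟩ := exists_subset_card_eq (s := T) (hTcard ▸ hm)
    have heU : e ∉ U := fun h => irrefl e (hTe e (hUT h))
    refine Or.inl ⟨insert e U, insert_subset he (hUT.trans hTS),
      by rw [card_insert_of_notMem heU, hUcard], ?_⟩
    rw [coe_insert]
    exact (hT.mono hUT).insert fun g hg _ => Or.inr (hTe g (hUT hg))
  push Not at htall
  obtain ⟨h, -, hfiber⟩ := exists_lt_card_fiber_of_mul_lt_card_of_maps_to
    (t := range m) (fun e he => mem_range.2 (htall e he)) (by rwa [card_range])
  obtain ⟨T, hTS, hTcard⟩ := exists_subset_card_eq hfiber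
  refine Or.inr ⟨T, hTS.trans (filter_subset _ _), hTcard, fun e he f hf hef => ?_⟩
  obtain ⟨heS, rfl⟩ := mem_filter.1 (hTS he)
  obtain ⟨hfS, hfh⟩ := mem_filter.1 (hTS hf)
  rcases hS heS hfS hef with (hR | hQ) | (hR | hQ)
  · exact absurd hfh (chainHeightBelow_lt_of_rel heS hR).ne'
  · exact Or.inl hQ
  · exact absurd hfh (chainHeightBelow_lt_of_rel hfS hR).ne
  · exact Or.inr hQ

end ChainHeight

instance : IsTrans (ℕ × ℕ) EdgeAlignment :=
  ⟨fun _ _ _ h₁ h₂ => by unfold EdgeAlignment at *; omega⟩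

instance : Std.Irrefl EdgeAlignment :=
  ⟨fun _ h => by unfold EdgeAlignment at h; omega⟩

instance : IsTrans (ℕ × ℕ) Nesting :=
  ⟨fun _ _ _ h₁ h₂ => by unfold Nesting at *; omega⟩

instance : Std.Irrefl Nesting :=
  ⟨fun _ h => by unfold Nesting at h; omega⟩

theorem isChain_alignment_sup_nesting_sup_crossing {M : Finset (ℕ × ℕ)}
    (hord : ∀ e ∈ M, e.1 < e.2)
    (hdisj : ∀ e ∈ M, ∀ f ∈ M, e ≠ f →
      e.1 ≠ f.1 ∧ e.1 ≠ f.2 ∧ e.2 ≠ f.1 ∧ e.2 ≠ f.2) :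
    IsChain (EdgeAlignment ⊔ (Nesting ⊔ Crossing)) (M : Set (ℕ × ℕ)) := by
  intro e he f hf hef
  have := hord e he
  have := hord f hf
  have := hdisj e he f hf hef
  simp only [Pi.sup_apply, sup_Prop_eq, EdgeAlignment, Nesting, Crossing]
  omega

theorem stmt_10_general (ℓ s w n : ℕ)
    (hn : ℓ * s * w + 1 ≤ n)
    (M : Finset (ℕ × ℕ)) (hcard : M.card = n)
    (hord : ∀ e ∈ M, e.1 < e.2)
    (hdisj : ∀ e ∈ M, ∀ f ∈ M, e ≠ f →
      e.1 ≠ f.1 ∧ e.1 ≠ f.2 ∧ e.2 ≠ f.1 ∧ e.2 ≠ f.2) :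
    (∃ L ⊆ M, L.card = ℓ + 1 ∧
        ∀ e ∈ L, ∀ f ∈ L, e ≠ f → EdgeAlignment e f ∨ EdgeAlignment f e) ∨
    (∃ L ⊆ M, L.card = s + 1 ∧
        ∀ e ∈ L, ∀ f ∈ L, e ≠ f → Nesting e f ∨ Nesting f e) ∨
    (∃ L ⊆ M, L.card = w + 1 ∧
        ∀ e ∈ L, ∀ f ∈ L, e ≠ f → Crossing e f ∨ Crossing f e) := by
  have hM := isChain_alignment_sup_nesting_sup_crossing hord hdisj
  have hMcard : ℓ * (s * w) < M.card := by rw [hcard, ← mul_assoc]; omega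
  rcases exists_isChain_of_mul_lt_card hM hMcard with
    ⟨L, hLM, hLcard, hL⟩ | ⟨A, hAM, hAcard, hA⟩
  · exact Or.inl ⟨L, hLM, hLcard, fun e he f hf => hL he hf⟩
  rcases exists_isChain_of_mul_lt_card hA (m := s) (k := w) (by omega)
    with ⟨L, hLA, hLcard, hL⟩ | ⟨L, hLA, hLcard, hL⟩
  · exact Or.inr (Or.inl ⟨L, hLA.trans hAM, hLcard, fun e he f hf => hL he hf⟩)
  · exact Or.inr (Or.inr ⟨L, hLA.trans hAM, hLcard, fun e he f hf => hL he hf⟩)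

/-- Erdős–Szekeres theorem for ordered 2-matchings: every ordered 2-uniform matching
of size `n ≥ ℓ·s·w + 1` on `[2n]` contains a line of size `ℓ+1`, a stack of size
`s+1`, or a wave of size `w+1`. -/
theorem stmt_10 (ℓ s w n : ℕ) (hl : 1 ≤ ℓ) (hs : 1 ≤ s) (hw : 1 ≤ w)
    (hn : ℓ * s * w + 1 ≤ n)
    (M : Finset (ℕ × ℕ)) (hcard : M.card = n)
    (hord : ∀ e ∈ M, e.1 < e.2)
    (hrange : ∀ e ∈ M, e.2 < 2 * n)
    (hdisj : ∀ e ∈ M, ∀ f ∈ M, e ≠ f →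
      e.1 ≠ f.1 ∧ e.1 ≠ f.2 ∧ e.2 ≠ f.1 ∧ e.2 ≠ f.2)
    (hcover : ∀ v < 2 * n, ∃ e ∈ M, v = e.1 ∨ v = e.2) :
    (∃ L ⊆ M, L.card = ℓ + 1 ∧
        ∀ e ∈ L, ∀ f ∈ L, e ≠ f → EdgeAlignment e f ∨ EdgeAlignment f e) ∨
    (∃ L ⊆ M, L.card = s + 1 ∧
        ∀ e ∈ L, ∀ f ∈ L, e ≠ f → Nesting e f ∨ Nesting f e) ∨
    (∃ L ⊆ M, L.card = w + 1 ∧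
        ∀ e ∈ L, ∀ f ∈ L, e ≠ f → Crossing e f ∨ Crossing f e) :=
  stmt_10_general ℓ s w n hn M hcard hord hdisj
end

section
/- Sharpness of the Erdős–Szekeres theorem for ordered 2-matchings: for all positive integers ℓ, s, w there exists an ordered 2-uniform matching of size exactly ℓ·s·w containing no line of size ℓ+1, no stack of size s+1, and no wave of size w+1. -/
/-!
In `L_ℓ[S_s[W_w]]` every edge has a copy `i < ℓ`, a level `j < s` in the stack and a position
`k < w` in the wave. Aligned edges lie in different copies, nested edges lie in one copy at
different levels, and crossing edges share copy and level but differ in position. Hence copy,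
level and position are injective on every line, stack and wave respectively, and the
pigeonhole principle bounds their sizes by `ℓ`, `s` and `w`.
-/

open Finset

theorem Nat.mul_add_lt_mul_add_of_lt {n a b a' : ℕ} (b' : ℕ) (hb : b < n) (ha : a < a') :
    n * a + b < n * a' + b' := by
  have := Nat.mul_le_mul_left n ha
  rw [Nat.mul_succ] at this
  omega

theorem Nat.mul_add_lt_mul_add_iff {n a b a' b' : ℕ} (hb : b < n) (hb' : b' < n) :
    n * a + b < n * a' + b' ↔ a < a' ∨ a = a' ∧ b < b' := by
  constructor
  · intro h
    rcases lt_trichotomy a a' with ha | rfl | ha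
    · exact Or.inl ha
    · exact Or.inr ⟨rfl, by omega⟩
    · exact absurd (Nat.mul_add_lt_mul_add_of_lt b hb' ha) h.not_gt
  · rintro (ha | ⟨rfl, hb⟩)
    · exact Nat.mul_add_lt_mul_add_of_lt b' hb ha
    · omega

theorem Nat.mul_add_eq_mul_add_iff {n a b a' b' : ℕ} (hb : b < n) (hb' : b' < n) :
    n * a + b = n * a' + b' ↔ a = a' ∧ b = b' := by
  have := Nat.mul_add_lt_mul_add_iff (a := a) (a' := a') hb hb'
  have := Nat.mul_add_lt_mul_add_iff (a := a') (a' := a) hb' hb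
  omega

theorem not_exists_pairwise_of_labelling {α : Type*} {M : Finset α} {R : α → α → Prop}
    {m : ℕ} (φ : α → ℕ) (hφ : ∀ e ∈ M, φ e < m)
    (hR : ∀ e ∈ M, ∀ f ∈ M, R e f → φ e ≠ φ f) :
    ¬ ∃ L ⊆ M, L.card = m + 1 ∧ ∀ e ∈ L, ∀ f ∈ L, e ≠ f → R e f ∨ R f e := by
  rintro ⟨L, hLM, hcard, hL⟩
  have hφ_inj : Set.InjOn φ L := by
    intro e he f hf hef
    by_contra hne
    rcases hL e he f hf hne with h | h
    · exact hR e (hLM he) f (hLM hf) h hef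
    · exact hR f (hLM hf) e (hLM he) h hef.symm
  have := card_le_card_of_injOn φ (fun e he => mem_range.2 (hφ e (hLM he))) hφ_inj
  rw [card_range] at this
  omega

namespace StackOfWavesBlowUp

/-- Copy `i` of the stack consists of the `2 * s` consecutive blocks `2 * s * i + j` of `w`
vertices each; `k` is the position inside the block. -/
def vertex (s w i j k : ℕ) : ℕ := w * (2 * s * i + j) + k

/-- Level `j` of the stack joins block `j` to block `2 * s - 1 - j` by a wave, whose edges
join equal positions. -/
def edge (s w i j k : ℕ) : ℕ × ℕ := (vertex s w i j k, vertex s w i (2 * s - 1 - j) k)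

/-- The blow-up `L_ℓ[S_s[W_w]]`. -/
def matching (ℓ s w : ℕ) : Finset (ℕ × ℕ) :=
  (range ℓ ×ˢ range s ×ˢ range w).image fun p => edge s w p.1 p.2.1 p.2.2

def copy (s w : ℕ) (e : ℕ × ℕ) : ℕ := e.1 / w / (2 * s)

def level (s w : ℕ) (e : ℕ × ℕ) : ℕ := e.1 / w % (2 * s)

def position (w : ℕ) (e : ℕ × ℕ) : ℕ := e.1 % w

variable {ℓ s w i j k i' j' k' : ℕ}

theorem vertex_lt_vertex_iff (hj : j < 2 * s) (hk : k < w) (hj' : j' < 2 * s)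
    (hk' : k' < w) :
    vertex s w i j k < vertex s w i' j' k' ↔ i < i' ∨ i = i' ∧ (j < j' ∨ j = j' ∧ k < k') := by
  rw [vertex, vertex, Nat.mul_add_lt_mul_add_iff hk hk', Nat.mul_add_lt_mul_add_iff hj hj',
    Nat.mul_add_eq_mul_add_iff hj hj']
  tauto

theorem vertex_inj (hj : j < 2 * s) (hk : k < w) (hj' : j' < 2 * s) (hk' : k' < w) :
    vertex s w i j k = vertex s w i' j' k' ↔ i = i' ∧ j = j' ∧ k = k' := by
  rw [vertex, vertex, Nat.mul_add_eq_mul_add_iff hk hk', Nat.mul_add_eq_mul_add_iff hj hj',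
    and_assoc]

theorem vertex_lt (hi : i < ℓ) (hj : j < 2 * s) (hk : k < w) :
    vertex s w i j k < 2 * (ℓ * s * w) :=
  calc vertex s w i j k < w * (2 * s * ℓ + 0) + 0 :=
        Nat.mul_add_lt_mul_add_of_lt 0 hk (Nat.mul_add_lt_mul_add_of_lt 0 hj hi)
    _ = 2 * (ℓ * s * w) := by ring

theorem exists_vertex_eq {v : ℕ} (hv : v < 2 * (ℓ * s * w)) :
    ∃ i < ℓ, ∃ j < 2 * s, ∃ k < w, vertex s w i j k = v := by
  have hw : 0 < w := Nat.pos_of_ne_zero (by rintro rfl; simp at hv)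
  have hs : 0 < 2 * s := Nat.pos_of_ne_zero (by intro h; simp_all)
  refine ⟨v / w / (2 * s), ?_, v / w % (2 * s), Nat.mod_lt _ hs, v % w, Nat.mod_lt _ hw, ?_⟩
  · rw [Nat.div_lt_iff_lt_mul hs, Nat.div_lt_iff_lt_mul hw]
    linarith
  · rw [vertex, Nat.div_add_mod, Nat.div_add_mod]

theorem copy_edge (hj : j < s) (hk : k < w) : copy s w (edge s w i j k) = i := by
  rw [copy, edge, vertex, Nat.mul_add_div (by omega), Nat.div_eq_of_lt hk, add_zero,
    Nat.mul_add_div (by omega), Nat.div_eq_of_lt (by omega), add_zero]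

theorem level_edge (hj : j < s) (hk : k < w) : level s w (edge s w i j k) = j := by
  rw [level, edge, vertex, Nat.mul_add_div (by omega), Nat.div_eq_of_lt hk, add_zero,
    Nat.mul_add_mod, Nat.mod_eq_of_lt (by omega)]

theorem position_edge (hk : k < w) : position w (edge s w i j k) = k := by
  rw [position, edge, vertex, Nat.mul_add_mod, Nat.mod_eq_of_lt hk]

theorem mem_matching {e : ℕ × ℕ} :
    e ∈ matching ℓ s w ↔ ∃ i < ℓ, ∃ j < s, ∃ k < w, edge s w i j k = e := by
  simp only [matching, mem_image, mem_product, mem_range, Prod.exists]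
  grind

theorem card_matching : (matching ℓ s w).card = ℓ * s * w := by
  rw [matching, card_image_of_injOn, card_product, card_product, card_range, card_range,
    card_range, Nat.mul_assoc]
  rintro ⟨i, j, k⟩ hp ⟨i', j', k'⟩ hp' he
  simp only [coe_product, Set.mem_prod, mem_coe, mem_range] at hp hp'
  have he₁ : vertex s w i j k = vertex s w i' j' k' := congrArg Prod.fst he
  obtain ⟨rfl, rfl, rfl⟩ := (vertex_inj (by omega) hp.2.2 (by omega) hp'.2.2).1 he₁
  rfl

theorem ne_of_edgeAlignment_edge (hj : j < s) (hk : k < w) (hj' : j' < s) (hk' : k' < w)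
    (h : EdgeAlignment (edge s w i j k) (edge s w i' j' k')) : i ≠ i' := by
  obtain ⟨-, h, -⟩ := h
  rw [edge, edge, vertex_lt_vertex_iff (by omega) hk (by omega) hk'] at h
  omega

theorem ne_of_nesting_edge (hj : j < s) (hk : k < w) (hj' : j' < s) (hk' : k' < w)
    (h : Nesting (edge s w i j k) (edge s w i' j' k')) : j ≠ j' := by
  obtain ⟨h₁, -, h₃⟩ := h
  rw [edge, edge, vertex_lt_vertex_iff (by omega) hk (by omega) hk'] at h₁
  rw [edge, edge, vertex_lt_vertex_iff (by omega) hk' (by omega) hk] at h₃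
  omega

theorem ne_of_crossing_edge (hj : j < s) (hk : k < w) (hj' : j' < s) (hk' : k' < w)
    (h : Crossing (edge s w i j k) (edge s w i' j' k')) : k ≠ k' := by
  obtain ⟨h₁, h₂, h₃⟩ := h
  rw [edge, edge, vertex_lt_vertex_iff (by omega) hk (by omega) hk'] at h₁ h₃
  rw [edge, edge, vertex_lt_vertex_iff (by omega) hk' (by omega) hk] at h₂
  omega

theorem fst_lt_snd_of_mem_matching {e : ℕ × ℕ} (he : e ∈ matching ℓ s w) : e.1 < e.2 := by
  obtain ⟨i, -, j, hj, k, hk, rfl⟩ := mem_matching.1 he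
  exact (vertex_lt_vertex_iff (by omega) hk (by omega) hk).2 (by omega)

theorem snd_lt_of_mem_matching {e : ℕ × ℕ} (he : e ∈ matching ℓ s w) :
    e.2 < 2 * (ℓ * s * w) := by
  obtain ⟨i, hi, j, hj, k, hk, rfl⟩ := mem_matching.1 he
  exact vertex_lt hi (by omega) hk

theorem endpoints_ne_of_mem_matching {e f : ℕ × ℕ} (he : e ∈ matching ℓ s w)
    (hf : f ∈ matching ℓ s w) (hef : e ≠ f) :
    e.1 ≠ f.1 ∧ e.1 ≠ f.2 ∧ e.2 ≠ f.1 ∧ e.2 ≠ f.2 := by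
  obtain ⟨i, -, j, hj, k, hk, rfl⟩ := mem_matching.1 he
  obtain ⟨i', -, j', hj', k', hk', rfl⟩ := mem_matching.1 hf
  have hne : ¬ (i = i' ∧ j = j' ∧ k = k') := by
    rintro ⟨rfl, rfl, rfl⟩
    exact hef rfl
  simp only [edge, ne_eq]
  rw [vertex_inj (by omega) hk (by omega) hk', vertex_inj (by omega) hk (by omega) hk',
    vertex_inj (by omega) hk (by omega) hk', vertex_inj (by omega) hk (by omega) hk']
  omega

theorem exists_mem_matching_endpoint {v : ℕ} (hv : v < 2 * (ℓ * s * w)) :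
    ∃ e ∈ matching ℓ s w, v = e.1 ∨ v = e.2 := by
  obtain ⟨i, hi, j, hj, k, hk, rfl⟩ := exists_vertex_eq hv
  by_cases hjs : j < s
  · exact ⟨edge s w i j k, mem_matching.2 ⟨i, hi, j, hjs, k, hk, rfl⟩, Or.inl rfl⟩
  · refine ⟨edge s w i (2 * s - 1 - j) k,
      mem_matching.2 ⟨i, hi, _, by omega, k, hk, rfl⟩, Or.inr ?_⟩
    rw [edge, show 2 * s - 1 - (2 * s - 1 - j) = j by omega]

theorem not_exists_line : ¬ ∃ L ⊆ matching ℓ s w, L.card = ℓ + 1 ∧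
    ∀ e ∈ L, ∀ f ∈ L, e ≠ f → EdgeAlignment e f ∨ EdgeAlignment f e := by
  refine not_exists_pairwise_of_labelling (copy s w) (fun e he => ?_) (fun e he f hf h => ?_)
  · obtain ⟨i, hi, j, hj, k, hk, rfl⟩ := mem_matching.1 he
    rwa [copy_edge hj hk]
  · obtain ⟨i, -, j, hj, k, hk, rfl⟩ := mem_matching.1 he
    obtain ⟨i', -, j', hj', k', hk', rfl⟩ := mem_matching.1 hf
    rw [copy_edge hj hk, copy_edge hj' hk']
    exact ne_of_edgeAlignment_edge hj hk hj' hk' h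

theorem not_exists_stack : ¬ ∃ L ⊆ matching ℓ s w, L.card = s + 1 ∧
    ∀ e ∈ L, ∀ f ∈ L, e ≠ f → Nesting e f ∨ Nesting f e := by
  refine not_exists_pairwise_of_labelling (level s w) (fun e he => ?_) (fun e he f hf h => ?_)
  · obtain ⟨i, -, j, hj, k, hk, rfl⟩ := mem_matching.1 he
    rwa [level_edge hj hk]
  · obtain ⟨i, -, j, hj, k, hk, rfl⟩ := mem_matching.1 he
    obtain ⟨i', -, j', hj', k', hk', rfl⟩ := mem_matching.1 hf
    rw [level_edge hj hk, level_edge hj' hk']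
    exact ne_of_nesting_edge hj hk hj' hk' h

theorem not_exists_wave : ¬ ∃ L ⊆ matching ℓ s w, L.card = w + 1 ∧
    ∀ e ∈ L, ∀ f ∈ L, e ≠ f → Crossing e f ∨ Crossing f e := by
  refine not_exists_pairwise_of_labelling (position w) (fun e he => ?_) (fun e he f hf h => ?_)
  · obtain ⟨i, -, j, -, k, hk, rfl⟩ := mem_matching.1 he
    rwa [position_edge hk]
  · obtain ⟨i, -, j, hj, k, hk, rfl⟩ := mem_matching.1 he
    obtain ⟨i', -, j', hj', k', hk', rfl⟩ := mem_matching.1 hf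
    rw [position_edge hk, position_edge hk']
    exact ne_of_crossing_edge hj hk hj' hk' h

end StackOfWavesBlowUp

open StackOfWavesBlowUp in
theorem stmt_11_general (ℓ s w : ℕ) :
    ∃ M : Finset (ℕ × ℕ),
      M.card = ℓ * s * w ∧
      (∀ e ∈ M, e.1 < e.2) ∧
      (∀ e ∈ M, e.2 < 2 * (ℓ * s * w)) ∧
      (∀ e ∈ M, ∀ f ∈ M, e ≠ f →
        e.1 ≠ f.1 ∧ e.1 ≠ f.2 ∧ e.2 ≠ f.1 ∧ e.2 ≠ f.2) ∧
      (∀ v < 2 * (ℓ * s * w), ∃ e ∈ M, v = e.1 ∨ v = e.2) ∧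
      ¬ (∃ L ⊆ M, L.card = ℓ + 1 ∧
          ∀ e ∈ L, ∀ f ∈ L, e ≠ f → EdgeAlignment e f ∨ EdgeAlignment f e) ∧
      ¬ (∃ L ⊆ M, L.card = s + 1 ∧
          ∀ e ∈ L, ∀ f ∈ L, e ≠ f → Nesting e f ∨ Nesting f e) ∧
      ¬ (∃ L ⊆ M, L.card = w + 1 ∧
          ∀ e ∈ L, ∀ f ∈ L, e ≠ f → Crossing e f ∨ Crossing f e) :=
  ⟨matching ℓ s w, card_matching, fun _ => fst_lt_snd_of_mem_matching,
    fun _ => snd_lt_of_mem_matching, fun _ he _ hf => endpoints_ne_of_mem_matching he hf,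
    fun _ => exists_mem_matching_endpoint, not_exists_line, not_exists_stack, not_exists_wave⟩

/-- Sharpness of the Erdős–Szekeres theorem for ordered 2-matchings: there is an
ordered 2-uniform matching of size exactly `ℓ·s·w` with no line of size `ℓ+1`, no
stack of size `s+1`, and no wave of size `w+1`. -/
theorem stmt_11 (ℓ s w : ℕ) (hl : 1 ≤ ℓ) (hs : 1 ≤ s) (hw : 1 ≤ w) :
    ∃ M : Finset (ℕ × ℕ),
      M.card = ℓ * s * w ∧
      (∀ e ∈ M, e.1 < e.2) ∧
      (∀ e ∈ M, e.2 < 2 * (ℓ * s * w)) ∧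
      (∀ e ∈ M, ∀ f ∈ M, e ≠ f →
        e.1 ≠ f.1 ∧ e.1 ≠ f.2 ∧ e.2 ≠ f.1 ∧ e.2 ≠ f.2) ∧
      (∀ v < 2 * (ℓ * s * w), ∃ e ∈ M, v = e.1 ∨ v = e.2) ∧
      ¬ (∃ L ⊆ M, L.card = ℓ + 1 ∧
          ∀ e ∈ L, ∀ f ∈ L, e ≠ f → EdgeAlignment e f ∨ EdgeAlignment f e) ∧
      ¬ (∃ L ⊆ M, L.card = s + 1 ∧
          ∀ e ∈ L, ∀ f ∈ L, e ≠ f → Nesting e f ∨ Nesting f e) ∧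
      ¬ (∃ L ⊆ M, L.card = w + 1 ∧
          ∀ e ∈ L, ∀ f ∈ L, e ≠ f → Crossing e f ∨ Crossing f e) :=
  stmt_11_general ℓ s w
end

section
/- For integers r ≥ 2, s ≥ 2 and s-1 ≤ m ≤ rn-1, the number of s-element subsets S of [rn] whose length (maximum element minus minimum element) is at most m equals rn·C(m, s-1) − (s-1)·C(m+1, s). -/
/-!
Sort the subsets by their maximum `j`. A `(k + 1)`-subset of `Fin N` with maximum `j` and length
at most `m` is `j` together with a `k`-subset of the `min j m` points of `[j - m, j)`, so the count
is `∑_{j < N} C(min j m, k) = C(m + 1, k + 1) + (N - m - 1) C(m, k)` by the hockey-stick identity.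
This equals `N C(m, k) - k C(m + 1, k + 1)` because `(m + 1) C(m, k) = (k + 1) C(m + 1, k + 1)`.
-/

open Finset

lemma Finset.max_eq_coe_iff {α : Type*} [LinearOrder α] {S : Finset α} {j : α} :
    S.max = j ↔ j ∈ S ∧ ∀ b ∈ S, b ≤ j :=
  ⟨fun h => ⟨mem_of_max h, fun _ hb => le_max_of_eq hb h⟩,
    fun ⟨hj, hle⟩ => le_antisymm (Finset.max_le fun b hb => WithBot.coe_le_coe.mpr (hle b hb))
      (le_max hj)⟩

lemma Finset.card_eq_sum_card_filter_max_eq {α : Type*} [LinearOrder α] [Fintype α]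
    {F : Finset (Finset α)} (hF : ∀ S ∈ F, S.Nonempty) :
    #F = ∑ j : α, #{S ∈ F | S.max = (j : WithBot α)} := by
  rw [card_eq_sum_card_fiberwise (f := Finset.max) (t := univ.image WithBot.some),
    sum_image fun _ _ _ _ h => WithBot.coe_injective h]
  intro S hS
  obtain ⟨j, hj⟩ := max_of_nonempty (hF S hS)
  exact hj ▸ mem_image_of_mem _ (mem_univ j)

lemma Finset.card_filter_mem_powersetCard_succ_insert {α : Type*} [DecidableEq α] {a : α}
    {s : Finset α} (ha : a ∉ s) (k : ℕ) :
    #{S ∈ powersetCard (k + 1) (insert a s) | a ∈ S} = (#s).choose k := by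
  have hnot : ∀ j, ∀ T ∈ powersetCard j s, a ∉ T :=
    fun _ T hT h => ha ((mem_powersetCard.mp hT).1 h)
  rw [powersetCard_succ_insert ha, filter_union, filter_false_of_mem (hnot (k + 1)), empty_union,
    filter_true_of_mem fun T hT => ?_, card_image_of_injOn, card_powersetCard]
  · intro T hT U hU h
    rw [← erase_insert (hnot k T hT), ← erase_insert (hnot k U hU)]
    exact congrArg (erase · a) h
  · obtain ⟨U, -, rfl⟩ := mem_image.mp hT
    exact mem_insert_self a U

lemma Nat.sum_range_choose_eq_choose_succ (n k : ℕ) :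
    ∑ j ∈ range n, j.choose k = n.choose (k + 1) := by
  induction n with
  | zero => simp
  | succ n ih => rw [sum_range_succ, ih, Nat.choose_succ_succ', add_comm]

lemma Nat.sum_range_choose_min {m N : ℕ} (hm : m < N) (k : ℕ) :
    ∑ j ∈ range N, (min j m).choose k
      = (m + 1).choose (k + 1) + (N - (m + 1)) * m.choose k := by
  have below : ∑ j ∈ range (m + 1), (min j m).choose k = ∑ j ∈ range (m + 1), j.choose k :=
    sum_congr rfl fun j hj => by rw [min_eq_left (Nat.le_of_lt_succ (mem_range.mp hj))]
  have above : ∑ j ∈ Ico (m + 1) N, (min j m).choose k = ∑ _j ∈ Ico (m + 1) N, m.choose k :=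
    sum_congr rfl fun j hj => by rw [min_eq_right (Nat.le_of_succ_le (mem_Ico.mp hj).1)]
  rw [← sum_range_add_sum_Ico _ hm, below, above, sum_range_choose_eq_choose_succ, sum_const,
    Nat.card_Ico, smul_eq_mul]

lemma Nat.choose_succ_succ_add_mul_choose {m N : ℕ} (hm : m < N) (k : ℕ) :
    (m + 1).choose (k + 1) + (N - (m + 1)) * m.choose k
      = N * m.choose k - k * (m + 1).choose (k + 1) := by
  obtain ⟨d, rfl⟩ := Nat.exists_eq_add_of_lt hm
  have := Nat.add_one_mul_choose_eq m k
  rw [show m + d + 1 - (m + 1) = d by omega]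
  refine (Nat.sub_eq_of_eq_add ?_).symm
  nlinarith

/-- `[N]` is modelled by `Fin N = {0, …, N - 1}`; lengths are unaffected by the shift. -/
def subsetsWithLengthLE (N k m : ℕ) : Finset (Finset (Fin N)) :=
  {S | #S = k ∧ ∀ a ∈ S, ∀ b ∈ S, (b : ℕ) - a ≤ m}

lemma card_filter_subsetsWithLengthLE_max_eq {N : ℕ} (k m : ℕ) (j : Fin N) :
    #{S ∈ subsetsWithLengthLE N (k + 1) m | S.max = (j : WithBot (Fin N))}
      = (min (j : ℕ) m).choose k := by
  set lo : Fin N := ⟨j - m, by omega⟩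
  have fibre : {S ∈ subsetsWithLengthLE N (k + 1) m | S.max = (j : WithBot (Fin N))}
      = {S ∈ powersetCard (k + 1) (Icc lo j) | j ∈ S} := by
    ext S
    simp only [subsetsWithLengthLE, mem_filter, mem_univ, true_and, mem_powersetCard,
      Finset.max_eq_coe_iff, subset_iff, mem_Icc, Fin.le_def, lo]
    constructor
    · rintro ⟨⟨hcard, hlen⟩, hj, hle⟩
      exact ⟨⟨fun b hb => ⟨by have := hlen b hb j hj; omega, hle b hb⟩, hcard⟩, hj⟩
    · rintro ⟨⟨hsub, hcard⟩, hj⟩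
      refine ⟨⟨hcard, fun a ha b hb => ?_⟩, hj, fun b hb => (hsub hb).2⟩
      have := hsub ha
      have := hsub hb
      omega
  rw [fibre, ← Ico_insert_right (Fin.le_def.mpr (Nat.sub_le j m)),
    card_filter_mem_powersetCard_succ_insert right_notMem_Ico, Fin.card_Ico, Fin.val_mk,
    Nat.sub_sub_eq_min]

theorem card_subsetsWithLengthLE {N m : ℕ} (hm : m < N) (k : ℕ) :
    #(subsetsWithLengthLE N (k + 1) m) = N * m.choose k - k * (m + 1).choose (k + 1) := by
  have nonempty (S) (hS : S ∈ subsetsWithLengthLE N (k + 1) m) : S.Nonempty :=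
    card_pos.mp ((mem_filter.mp hS).2.1 ▸ k.succ_pos)
  rw [card_eq_sum_card_filter_max_eq nonempty]
  simp only [card_filter_subsetsWithLengthLE_max_eq]
  rw [Fin.sum_univ_eq_sum_range (fun j => (min j m).choose k), Nat.sum_range_choose_min hm,
    Nat.choose_succ_succ_add_mul_choose hm]

theorem stmt_15_general (r n s m : ℕ) (hs : 2 ≤ s) (hm2 : m ≤ r * n - 1) :
    Nat.card {S : Finset (Fin (r * n)) //
        S.card = s ∧ ∀ a ∈ S, ∀ b ∈ S, (b : ℕ) - (a : ℕ) ≤ m}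
      = r * n * Nat.choose m (s - 1) - (s - 1) * Nat.choose (m + 1) s := by
  obtain ⟨k, rfl⟩ : ∃ k, s = k + 1 := ⟨s - 1, by omega⟩
  rw [Nat.card_eq_fintype_card, Fintype.card_subtype, Nat.add_sub_cancel]
  generalize r * n = N at *
  rcases N.eq_zero_or_pos with rfl | hN
  · simp
  · exact card_subsetsWithLengthLE (by omega) k

/-- For `r ≥ 2`, `s ≥ 2` and `s-1 ≤ m ≤ rn-1`, the number of `s`-element subsets of
`[rn]` whose length (max minus min) is at most `m` equals
`rn·C(m, s-1) − (s-1)·C(m+1, s)`. -/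
theorem stmt_15 (r n s m : ℕ) (hr : 2 ≤ r) (hs : 2 ≤ s)
    (hm1 : s - 1 ≤ m) (hm2 : m ≤ r * n - 1) :
    Nat.card {S : Finset (Fin (r * n)) //
        S.card = s ∧ ∀ a ∈ S, ∀ b ∈ S, (b : ℕ) - (a : ℕ) ≤ m}
      = r * n * Nat.choose m (s - 1) - (s - 1) * Nat.choose (m + 1) s :=
  stmt_15_general r n s m hs hm2
end

section
/- Pattern 3-matching rigidity: if M is an ordered 3-uniform matching in which every pair of edges forms either pattern P3 = AABBAB or pattern P7 = ABAABB, then all pairs of edges of M form the same pattern (M is entirely a P3-clique or entirely a P7-clique). -/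
/-- Edges `e, f` (3-sets) form pattern `P3 = AABBAB`:
`a1 < a2 < b1 < b2 < a3 < b3`. -/
def PatternP3 (e f : Finset ℕ) : Prop :=
  ∃ a1 a2 a3 b1 b2 b3 : ℕ, e = {a1, a2, a3} ∧ f = {b1, b2, b3} ∧
    a1 < a2 ∧ a2 < b1 ∧ b1 < b2 ∧ b2 < a3 ∧ a3 < b3

/-- Edges `e, f` (3-sets) form pattern `P7 = ABAABB`:
`a1 < b1 < a2 < a3 < b2 < b3`. -/
def PatternP7 (e f : Finset ℕ) : Prop :=
  ∃ a1 a2 a3 b1 b2 b3 : ℕ, e = {a1, a2, a3} ∧ f = {b1, b2, b3} ∧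
    a1 < b1 ∧ b1 < a2 ∧ a2 < a3 ∧ a3 < b2 ∧ b2 < b3

/-!
Colour a pair of edges red if it forms `P3` and blue if it forms `P7`. Writing each edge as
`{x1 < x2 < x3}` and comparing coordinates, an edge forming `P3` with `e` and `P7` with `g` forces
`e` and `g` to be equal or to form neither pattern. So if every pair is coloured, all pairs at a
given edge have the same colour. Then a red pair at `a` and a blue pair at `c` are impossible: the
pair `a, c` would have to be both red and blue.
-/

theorem Set.pairwise_or_pairwise_of_not_mixed {α : Type*} {s : Set α} {r r' : α → α → Prop}
    [Std.Symm r'] (h : s.Pairwise fun x y => r x y ∨ r' x y)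
    (hmixed : ∀ x ∈ s, ∀ y ∈ s, ∀ z ∈ s, x ≠ y → x ≠ z → r x y → r' x z → False) :
    s.Pairwise r ∨ s.Pairwise r' := by
  refine or_iff_not_imp_left.2 fun hr c hc d hd hcd => ?_
  obtain ⟨a, ha, b, hb, hab, hrab⟩ : ∃ a ∈ s, ∃ b ∈ s, a ≠ b ∧ ¬r a b := by
    simpa [Set.Pairwise] using hr
  have hr'ab : r' a b := (h ha hb hab).resolve_left hrab
  refine (h hc hd hcd).resolve_left fun hrcd => ?_
  obtain rfl | hac := eq_or_ne a c
  · exact hmixed a ha d hd b hb hcd hab hrcd hr'ab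
  rcases h ha hc hac with hrac | hr'ac
  · exact hmixed a ha c hc b hb hac hab hrac hr'ab
  · exact hmixed c hc d hd a ha hcd hac.symm hrcd (Std.Symm.symm _ _ hr'ac)

section SortedTriple

variable {α : Type*} [LinearOrder α]

theorem Finset.exists_sorted_of_card_eq_three {s : Finset α} (h : s.card = 3) :
    ∃ a b c, a < b ∧ b < c ∧ s = {a, b, c} := by
  have hg := (s.orderEmbOfFin h).strictMono
  refine ⟨_, _, _, hg (show (0 : Fin 3) < 1 by decide), hg (show (1 : Fin 3) < 2 by decide), ?_⟩
  conv_lhs => rw [← s.image_orderEmbOfFin_univ h]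
  simp [Fin.univ_succ]

theorem Finset.sorted_triple_inj {a1 a2 a3 b1 b2 b3 : α}
    (h : ({a1, a2, a3} : Finset α) = {b1, b2, b3})
    (ha12 : a1 < a2) (ha23 : a2 < a3) (hb12 : b1 < b2) (hb23 : b2 < b3) :
    a1 = b1 ∧ a2 = b2 ∧ a3 = b3 := by
  have hmem (x : α) : x = a1 ∨ x = a2 ∨ x = a3 ↔ x = b1 ∨ x = b2 ∨ x = b3 := by
    simpa using Finset.ext_iff.1 h x
  have := (hmem a1).1; have := (hmem a2).1; have := (hmem a3).1
  have := (hmem b1).2; have := (hmem b2).2; have := (hmem b3).2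
  grind

end SortedTriple

def FormsP3 (e f : Finset ℕ) : Prop := PatternP3 e f ∨ PatternP3 f e

def FormsP7 (e f : Finset ℕ) : Prop := PatternP7 e f ∨ PatternP7 f e

instance : Std.Symm FormsP7 := ⟨fun _ _ => Or.symm⟩

section PatternCoordinates

variable {e1 e2 e3 f1 f2 f3 : ℕ}

theorem patternP3_sorted_iff (he12 : e1 < e2) (he23 : e2 < e3) (hf12 : f1 < f2)
    (hf23 : f2 < f3) :
    PatternP3 {e1, e2, e3} {f1, f2, f3} ↔ e2 < f1 ∧ f2 < e3 ∧ e3 < f3 := by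
  refine ⟨fun ⟨a1, a2, a3, b1, b2, b3, hea, hfb, h1, h2, h3, h4, h5⟩ => ?_,
    fun h => ⟨e1, e2, e3, f1, f2, f3, rfl, rfl, he12, h.1, hf12, h.2.1, h.2.2⟩⟩
  obtain ⟨rfl, rfl, rfl⟩ := Finset.sorted_triple_inj hea he12 he23 h1 (by omega)
  obtain ⟨rfl, rfl, rfl⟩ := Finset.sorted_triple_inj hfb hf12 hf23 h3 (by omega)
  omega

theorem patternP7_sorted_iff (he12 : e1 < e2) (he23 : e2 < e3) (hf12 : f1 < f2)
    (hf23 : f2 < f3) :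
    PatternP7 {e1, e2, e3} {f1, f2, f3} ↔ e1 < f1 ∧ f1 < e2 ∧ e3 < f2 := by
  refine ⟨fun ⟨a1, a2, a3, b1, b2, b3, hea, hfb, h1, h2, h3, h4, h5⟩ => ?_,
    fun h => ⟨e1, e2, e3, f1, f2, f3, rfl, rfl, h.1, h.2.1, he23, h.2.2, hf23⟩⟩
  obtain ⟨rfl, rfl, rfl⟩ := Finset.sorted_triple_inj hea he12 he23 (by omega) h3
  obtain ⟨rfl, rfl, rfl⟩ := Finset.sorted_triple_inj hfb hf12 hf23 (by omega) h5
  omega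

end PatternCoordinates

theorem not_eq_or_forms_of_formsP3_of_formsP7 {e f g : Finset ℕ}
    (he : e.card = 3) (hf : f.card = 3) (hg : g.card = 3)
    (h3 : FormsP3 f e) (h7 : FormsP7 f g) : ¬(e = g ∨ FormsP3 e g ∨ FormsP7 e g) := by
  obtain ⟨e1, e2, e3, he12, he23, rfl⟩ := Finset.exists_sorted_of_card_eq_three he
  obtain ⟨f1, f2, f3, hf12, hf23, rfl⟩ := Finset.exists_sorted_of_card_eq_three hf
  obtain ⟨g1, g2, g3, hg12, hg23, rfl⟩ := Finset.exists_sorted_of_card_eq_three hg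
  simp (disch := omega) only [FormsP3, FormsP7, patternP3_sorted_iff, patternP7_sorted_iff]
    at h3 h7 ⊢
  rintro (heg | hforms)
  · obtain ⟨rfl, rfl, rfl⟩ := Finset.sorted_triple_inj heg he12 he23 hg12 hg23
    omega
  · omega

theorem stmt_17_general (M : Finset (Finset ℕ))
    (hcard : ∀ e ∈ M, e.card = 3)
    (hpat : ∀ e ∈ M, ∀ f ∈ M, e ≠ f →
      PatternP3 e f ∨ PatternP3 f e ∨ PatternP7 e f ∨ PatternP7 f e) :
    (∀ e ∈ M, ∀ f ∈ M, e ≠ f → PatternP3 e f ∨ PatternP3 f e) ∨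
    (∀ e ∈ M, ∀ f ∈ M, e ≠ f → PatternP7 e f ∨ PatternP7 f e) := by
  have hM : (M : Set (Finset ℕ)).Pairwise fun e f => FormsP3 e f ∨ FormsP7 e f :=
    fun e he f hf hef => or_assoc.2 (hpat e he f hf hef)
  refine Set.pairwise_or_pairwise_of_not_mixed (r := FormsP3) (r' := FormsP7) hM
    fun f hf e he g hg _ _ h3 h7 => ?_
  refine not_eq_or_forms_of_formsP3_of_formsP7 (hcard e he) (hcard f hf) (hcard g hg) h3 h7 ?_
  obtain rfl | heg := eq_or_ne e g
  exacts [Or.inl rfl, Or.inr (hM he hg heg)]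

/-- Rigidity: if every pair of edges of an ordered 3-matching forms pattern `P3` or
pattern `P7`, then all pairs form the same pattern. -/
theorem stmt_17 (M : Finset (Finset ℕ))
    (hcard : ∀ e ∈ M, e.card = 3)
    (hdisj : ∀ e ∈ M, ∀ f ∈ M, e ≠ f → Disjoint e f)
    (hpat : ∀ e ∈ M, ∀ f ∈ M, e ≠ f →
      PatternP3 e f ∨ PatternP3 f e ∨ PatternP7 e f ∨ PatternP7 f e) :
    (∀ e ∈ M, ∀ f ∈ M, e ≠ f → PatternP3 e f ∨ PatternP3 f e) ∨
    (∀ e ∈ M, ∀ f ∈ M, e ≠ f → PatternP7 e f ∨ PatternP7 f e) :=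
  stmt_17_general M hcard hpat
end

section
/- Transitivity of alignment-type grouping for patterns P2 = AABBBA and P4 = ABBBAA in 3-matchings: if M is an ordered 3-uniform matching with edges e_1, ..., e_n ordered by their left endpoints, and every pair of edges forms pattern P2 or pattern P4, then for each fixed h the pattern formed by e_h with e_j is the same for all j > h. -/
/-!
Both patterns place the second edge inside a gap of the first one: `P2` inside its upper gap
`(a₂, a₃)`, `P4` inside its lower gap `(a₁, a₂)`. So if `e h` formed `P2` with some later edge and
`P4` with another, the `P4` edge would lie entirely below the `P2` edge. When the `P2` edge comes
first this contradicts the order of the minima; when the `P4` edge comes first, the `P2` edge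
would have to lie inside a gap of the `P4` edge, which is impossible since it lies entirely above it.
-/

/-- Edges `e, f` (3-sets) form pattern `P2 = AABBBA`:
`a1 < a2 < b1 < b2 < b3 < a3`. -/
def PatternP2 (e f : Finset ℕ) : Prop :=
  ∃ a1 a2 a3 b1 b2 b3 : ℕ, e = {a1, a2, a3} ∧ f = {b1, b2, b3} ∧
    a1 < a2 ∧ a2 < b1 ∧ b1 < b2 ∧ b2 < b3 ∧ b3 < a3

/-- Edges `e, f` (3-sets) form pattern `P4 = ABBBAA`:
`a1 < b1 < b2 < b3 < a2 < a3`. -/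
def PatternP4 (e f : Finset ℕ) : Prop :=
  ∃ a1 a2 a3 b1 b2 b3 : ℕ, e = {a1, a2, a3} ∧ f = {b1, b2, b3} ∧
    a1 < b1 ∧ b1 < b2 ∧ b2 < b3 ∧ b3 < a2 ∧ a2 < a3

theorem Finset.eq_of_sorted_triple_eq {α : Type*} [LinearOrder α] {a₁ a₂ a₃ b₁ b₂ b₃ : α}
    (ha₁ : a₁ < a₂) (ha₂ : a₂ < a₃) (hb₁ : b₁ < b₂) (hb₂ : b₂ < b₃)
    (h : ({a₁, a₂, a₃} : Finset α) = {b₁, b₂, b₃}) :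
    a₁ = b₁ ∧ a₂ = b₂ ∧ a₃ = b₃ := by
  have h₁ : a₁ ∈ ({b₁, b₂, b₃} : Finset α) := h ▸ by simp
  have h₂ : a₂ ∈ ({b₁, b₂, b₃} : Finset α) := h ▸ by simp
  have h₃ : a₃ ∈ ({b₁, b₂, b₃} : Finset α) := h ▸ by simp
  have h₄ : b₁ ∈ ({a₁, a₂, a₃} : Finset α) := h.symm ▸ by simp
  simp only [Finset.mem_insert, Finset.mem_singleton] at h₁ h₂ h₃ h₄
  rcases h₁ with rfl | rfl | rfl <;> rcases h₂ with rfl | rfl | rfl <;>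
    rcases h₃ with rfl | rfl | rfl <;> rcases h₄ with h₄ | h₄ | h₄ <;>
    first | exact ⟨rfl, rfl, rfl⟩ | order

theorem Finset.min_le_min_of_forall_lt {α : Type*} [LinearOrder α] {s t : Finset α} {x : α}
    (hx : x ∈ s) (h : ∀ y ∈ t, x < y) : s.min ≤ t.min :=
  Finset.le_min fun y hy => (Finset.min_le hx).trans (WithTop.coe_le_coe.mpr (h y hy).le)

theorem PatternP4.lt_of_patternP2 {e f g : Finset ℕ} (hg : PatternP4 e g) (hf : PatternP2 e f)
    {x y : ℕ} (hx : x ∈ g) (hy : y ∈ f) : x < y := by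
  obtain ⟨a₁, a₂, a₃, b₁, b₂, b₃, rfl, rfl, hab, hb₁, hb₂, hba, ha⟩ := hg
  obtain ⟨c₁, c₂, c₃, d₁, d₂, d₃, he, rfl, hc, hcd, hd₁, hd₂, hdc⟩ := hf
  obtain ⟨-, rfl, -⟩ := Finset.eq_of_sorted_triple_eq (by omega) ha hc (by omega) he
  simp only [Finset.mem_insert, Finset.mem_singleton] at hx hy
  omega

theorem PatternP2.nonempty_right {e f : Finset ℕ} (h : PatternP2 e f) : f.Nonempty := by
  obtain ⟨-, -, -, b, -, -, -, rfl, -⟩ := h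
  exact Finset.insert_nonempty b _

theorem PatternP4.nonempty_right {e f : Finset ℕ} (h : PatternP4 e f) : f.Nonempty := by
  obtain ⟨-, -, -, b, -, -, -, rfl, -⟩ := h
  exact Finset.insert_nonempty b _

theorem exists_forall_lt_of_pattern {e f : Finset ℕ} (h : PatternP2 e f ∨ PatternP4 e f) :
    ∃ a ∈ e, ∀ y ∈ f, y < a := by
  rcases h with ⟨_, _, a, _, _, _, rfl, rfl, hlt⟩ | ⟨_, a, _, _, _, _, rfl, rfl, hlt⟩ <;>
  · refine ⟨a, by simp, fun y hy => ?_⟩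
    simp only [Finset.mem_insert, Finset.mem_singleton] at hy
    omega

theorem not_patternP2_patternP4_of_min_lt {e f g : Finset ℕ} (hf : PatternP2 e f)
    (hg : PatternP4 e g) (hmin : f.min < g.min) : False := by
  obtain ⟨x, hx⟩ := hg.nonempty_right
  exact (Finset.min_le_min_of_forall_lt hx fun y hy => hg.lt_of_patternP2 hf hx hy).not_gt hmin

theorem not_patternP4_patternP2_of_pattern {e f g : Finset ℕ} (hf : PatternP4 e f)
    (hg : PatternP2 e g) (hfg : PatternP2 f g ∨ PatternP4 f g) : False := by
  obtain ⟨a, ha, hga⟩ := exists_forall_lt_of_pattern hfg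
  obtain ⟨y, hy⟩ := hg.nonempty_right
  exact (hga y hy).not_gt (hf.lt_of_patternP2 hg ha hy)

theorem stmt_18_general (n : ℕ) (e : Fin n → Finset ℕ)
    (hord : ∀ i j : Fin n, i < j → (e i).min < (e j).min)
    (hpat : ∀ i j : Fin n, i < j → PatternP2 (e i) (e j) ∨ PatternP4 (e i) (e j)) :
    ∀ h i j : Fin n, h < i → h < j →
      (PatternP2 (e h) (e i) ↔ PatternP2 (e h) (e j)) := by
  intro h
  have iff_of_lt : ∀ i j : Fin n, h < i → i < j →
      (PatternP2 (e h) (e i) ↔ PatternP2 (e h) (e j)) := by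
    intro i j hi hij
    constructor
    · intro hi₂
      exact (hpat h j (hi.trans hij)).resolve_right fun hj₄ =>
        not_patternP2_patternP4_of_min_lt hi₂ hj₄ (hord i j hij)
    · intro hj₂
      exact (hpat h i hi).resolve_right fun hi₄ =>
        not_patternP4_patternP2_of_pattern hi₄ hj₂ (hpat i j hij)
  intro i j hi hj
  rcases lt_trichotomy i j with hij | rfl | hij
  · exact iff_of_lt i j hi hij
  · rfl
  · exact (iff_of_lt j i hj hij).symm

/-- Transitivity of alignment-type grouping for patterns `P2` and `P4`: if the edges
`e 0, …, e (n-1)` of an ordered 3-matching are listed in increasing order of their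
minimum elements and every pair forms `P2` or `P4`, then for each fixed `h` the
pattern formed by `e h` with `e j` is the same for all `j > h`. -/
theorem stmt_18 (n : ℕ) (e : Fin n → Finset ℕ)
    (hcard : ∀ i, (e i).card = 3)
    (hdisj : ∀ i j, i ≠ j → Disjoint (e i) (e j))
    (hord : ∀ i j : Fin n, i < j → (e i).min < (e j).min)
    (hpat : ∀ i j : Fin n, i < j → PatternP2 (e i) (e j) ∨ PatternP4 (e i) (e j)) :
    ∀ h i j : Fin n, h < i → h < j →
      (PatternP2 (e h) (e i) ↔ PatternP2 (e h) (e j)) :=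
  stmt_18_general n e hord hpat
end

section
/- Expected number of P-cliques bound: let P be any r-pattern and k ≥ 2. The number of k-subsets of [rn] of size rk times the ratio α_{n-k}/α_n, where α_m = (rm)!/((r!)^m · m!), equals ((r!)^k / (rk)!) · n!/(n-k)!, and hence the expected number of P-cliques of size k in a uniformly random ordered r-matching of size n is at most (e^r · r! · n / (rk)^r)^k. -/
/-! Writing `n = m + k`, the factorials `(rm)!`, `m!` and `(r!)^m` of `α_{n-k}` cancel against
those of `C(rn, rk)` and `α_n`, leaving `(r!)^k / (rk)! · n!/(n-k)!`. The bound then follows from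
`n!/(n-k)! ≤ n^k` and `(rk)! ≥ (rk)^{rk} / e^{rk}`, the latter being one term of the series of
`e^{rk}`. -/

/-- `α_m = (rm)! / ((r!)^m · m!)`, the number of ordered `r`-matchings of size `m`. -/
noncomputable def alphaM (r m : ℕ) : ℝ :=
  (Nat.factorial (r * m) : ℝ) /
    ((Nat.factorial r : ℝ) ^ m * (Nat.factorial m : ℝ))

open Nat Real

theorem choose_mul_alphaM_div_alphaM {r n k : ℕ} (hkn : k ≤ n) :
    ((r * n).choose (r * k) : ℝ) * (alphaM r (n - k) / alphaM r n) =
      ((r ! : ℝ) ^ k / ((r * k)! : ℝ)) * ((n ! : ℝ) / ((n - k)! : ℝ)) := by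
  obtain ⟨m, rfl⟩ := Nat.exists_eq_add_of_le' hkn
  have hrk : r * k ≤ r * (m + k) := Nat.mul_le_mul_left r hkn
  rw [Nat.add_sub_cancel, Nat.cast_choose ℝ hrk, mul_add, Nat.add_sub_cancel, alphaM, alphaM,
    mul_add, pow_add]
  field_simp

theorem factorial_div_factorial_sub_le_pow {n k : ℕ} (hkn : k ≤ n) :
    (n ! : ℝ) / ((n - k)! : ℝ) ≤ (n : ℝ) ^ k := by
  rw [← Nat.factorial_mul_descFactorial hkn, Nat.cast_mul,
    mul_div_cancel_left₀ _ (by positivity)]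
  exact_mod_cast Nat.descFactorial_le_pow n k

theorem inv_factorial_le_exp_div_pow (m : ℕ) :
    ((m ! : ℝ))⁻¹ ≤ exp m / (m : ℝ) ^ m := by
  have h := Real.pow_div_factorial_le_exp (m : ℝ) m.cast_nonneg m
  have hm : (0 : ℝ) < (m : ℝ) ^ m := by
    rcases m.eq_zero_or_pos with rfl | hm
    · simp
    · positivity
  rw [le_div_iff₀ hm, ← div_eq_inv_mul]
  exact h

theorem factorial_pow_div_mul_le {r n k : ℕ} (hkn : k ≤ n) :
    ((r ! : ℝ) ^ k / ((r * k)! : ℝ)) * ((n ! : ℝ) / ((n - k)! : ℝ)) ≤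
      (exp r * (r ! : ℝ) * (n : ℝ) / ((r * k : ℕ) : ℝ) ^ r) ^ k := by
  have hexp : exp (r : ℝ) ^ k = exp ((r * k : ℕ) : ℝ) := by
    rw [← Real.exp_nat_mul, Nat.cast_mul, mul_comm]
  calc ((r ! : ℝ) ^ k / ((r * k)! : ℝ)) * ((n ! : ℝ) / ((n - k)! : ℝ))
      = (r ! : ℝ) ^ k * ((n ! : ℝ) / ((n - k)! : ℝ)) * ((r * k)! : ℝ)⁻¹ := by ring
    _ ≤ (r ! : ℝ) ^ k * (n : ℝ) ^ k * (exp ((r * k : ℕ) : ℝ) / ((r * k : ℕ) : ℝ) ^ (r * k)) := by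
      gcongr
      · exact factorial_div_factorial_sub_le_pow hkn
      · exact inv_factorial_le_exp_div_pow (r * k)
    _ = (exp r * (r ! : ℝ) * (n : ℝ) / ((r * k : ℕ) : ℝ) ^ r) ^ k := by
      rw [div_pow, mul_pow, mul_pow, hexp, ← pow_mul]
      ring

theorem stmt_19_general (r n k : ℕ) (hkn : k ≤ n) :
    ((Nat.choose (r * n) (r * k) : ℝ) * (alphaM r (n - k) / alphaM r n)
        = ((Nat.factorial r : ℝ) ^ k / (Nat.factorial (r * k) : ℝ)) *
            ((Nat.factorial n : ℝ) / (Nat.factorial (n - k) : ℝ))) ∧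
    ((Nat.choose (r * n) (r * k) : ℝ) * (alphaM r (n - k) / alphaM r n)
        ≤ (Real.exp r * (Nat.factorial r : ℝ) * (n : ℝ) / ((r * k : ℕ) : ℝ) ^ r) ^ k) := by
  have h := choose_mul_alphaM_div_alphaM (r := r) hkn
  exact ⟨h, h ▸ factorial_pow_div_mul_le hkn⟩

/-- The expected number of `P`-cliques of size `k` in a uniformly random ordered
`r`-matching of size `n`, namely `C(rn, rk) · α_{n-k}/α_n`, equals
`((r!)^k/(rk)!) · n!/(n-k)!` and is at most `(eʳ · r! · n / (rk)ʳ)^k`. -/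
theorem stmt_19 (r n k : ℕ) (hr : 1 ≤ r) (hk : 2 ≤ k) (hkn : k ≤ n) :
    ((Nat.choose (r * n) (r * k) : ℝ) * (alphaM r (n - k) / alphaM r n)
        = ((Nat.factorial r : ℝ) ^ k / (Nat.factorial (r * k) : ℝ)) *
            ((Nat.factorial n : ℝ) / (Nat.factorial (n - k) : ℝ))) ∧
    ((Nat.choose (r * n) (r * k) : ℝ) * (alphaM r (n - k) / alphaM r n)
        ≤ (Real.exp r * (Nat.factorial r : ℝ) * (n : ℝ) / ((r * k : ℕ) : ℝ) ^ r) ^ k) :=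
  stmt_19_general r n k hkn
end
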